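/- arXiv:1407.4410 — 12 statements merged into one kernel-verified Lean document; each statement's English description precedes it below -/
import Mathlib

section
/- Let (a_n)_{n≥0} be a sequence of non-negative real numbers and let p ∈ (0,1). If the sequence of p-binomial means (a^p_n)_{n≥0} converges to a real number a, then the sequence of arithmetic means (a*_n)_{n≥0} also converges to a. -/
/-!
Write `S k = a 0 + ⋯ + a (k - 1)` and `b n k = (n choose k) pᵏ (1 - p)ⁿ⁻ᵏ`. Pascal's rule
gives `∑ₖ b (n+1) k * S k - ∑ₖ b n k * S k = p * binMean p a n`, so the binomial mean of `S`
at `n` is `p * n` times the Cesàro mean of the first `n` binomial means of `a`, i.e.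
`p l n + o(n)`.
As `a ≥ 0`, `S` is monotone, and by Chebyshev the weights `b n ·` (variance `n p (1 - p)`)
concentrate within `o(n)` of `n p`; comparing with `S M` for `M ≈ q n`, `q` slightly below or
above `p`, squeezes `S M / M` to `l`.
-/

open Filter Finset

/-- The `p`-binomial mean of a sequence. -/
noncomputable def binMean (p : ℝ) (a : ℕ → ℝ) (n : ℕ) : ℝ :=
  ∑ i ∈ Finset.range (n + 1), (n.choose i : ℝ) * p ^ i * (1 - p) ^ (n - i) * a i

/-- The arithmetic (Cesàro) mean of a sequence. -/
noncomputable def cesaroMean (a : ℕ → ℝ) (n : ℕ) : ℝ :=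
  (1 / (n + 1 : ℝ)) * ∑ i ∈ Finset.range (n + 1), a i

open Polynomial

namespace bernsteinPolynomial

variable {R : Type*} [CommRing R]

theorem succ_zero (n : ℕ) :
    bernsteinPolynomial R (n + 1) 0 = (1 - X) * bernsteinPolynomial R n 0 := by
  simp [bernsteinPolynomial, pow_succ']

theorem succ_succ (n k : ℕ) :
    bernsteinPolynomial R (n + 1) (k + 1) =
      X * bernsteinPolynomial R n k + (1 - X) * bernsteinPolynomial R n (k + 1) := by
  rcases lt_or_ge k n with hk | hk
  · obtain ⟨m, rfl⟩ := Nat.exists_eq_add_of_lt hk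
    simp only [bernsteinPolynomial, Nat.choose_succ_succ', Nat.cast_add,
      show k + m + 1 + 1 - (k + 1) = m + 1 by omega, show k + m + 1 - k = m + 1 by omega,
      show k + m + 1 - (k + 1) = m by omega]
    ring
  · rcases hk.eq_or_lt with rfl | hk
    · simp only [bernsteinPolynomial, Nat.choose_self, Nat.choose_succ_self, Nat.sub_self,
        Nat.cast_one, Nat.cast_zero, pow_zero, zero_mul]
      ring
    · simp [eq_zero_of_lt R hk, eq_zero_of_lt R (Nat.succ_lt_succ hk),
        eq_zero_of_lt R (hk.trans (Nat.lt_succ_self k))]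

theorem sum_eval (p : R) (n : ℕ) :
    ∑ k ∈ range (n + 1), (bernsteinPolynomial R n k).eval p = 1 := by
  simpa [eval_finsetSum] using congrArg (eval p) (sum R n)

theorem sum_eval_succ_mul (p : R) (f : ℕ → R) (n : ℕ) :
    ∑ k ∈ range (n + 2), (bernsteinPolynomial R (n + 1) k).eval p * f k =
      ∑ k ∈ range (n + 1),
        (bernsteinPolynomial R n k).eval p * (p * f (k + 1) + (1 - p) * f k) := by
  have hlast : (bernsteinPolynomial R n (n + 1)).eval p = 0 := by
    rw [eq_zero_of_lt R n.lt_succ_self, eval_zero]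
  have hshift : ∑ k ∈ range (n + 1), (bernsteinPolynomial R n k).eval p * f k =
      ∑ k ∈ range (n + 1), (bernsteinPolynomial R n (k + 1)).eval p * f (k + 1) +
        (bernsteinPolynomial R n 0).eval p * f 0 := by
    rw [← sum_range_succ' (fun k => (bernsteinPolynomial R n k).eval p * f k),
      sum_range_succ _ (n + 1), hlast, zero_mul, add_zero]
  calc ∑ k ∈ range (n + 2), (bernsteinPolynomial R (n + 1) k).eval p * f k
      = ∑ k ∈ range (n + 1), (p * (bernsteinPolynomial R n k).eval p * f (k + 1) +
          (1 - p) * ((bernsteinPolynomial R n (k + 1)).eval p * f (k + 1))) +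
          (1 - p) * ((bernsteinPolynomial R n 0).eval p * f 0) := by
        simp only [sum_range_succ' _ (n + 1), succ_succ, succ_zero, eval_add, eval_mul, eval_sub,
          eval_one, eval_X]
        congr 1
        · exact sum_congr rfl fun k _ => by ring
        · ring
    _ = p * ∑ k ∈ range (n + 1), (bernsteinPolynomial R n k).eval p * f (k + 1) +
          (1 - p) * ∑ k ∈ range (n + 1), (bernsteinPolynomial R n k).eval p * f k := by
        rw [hshift, sum_add_distrib, mul_add, mul_sum, mul_sum, ← add_assoc]
        simp only [mul_assoc]
    _ = ∑ k ∈ range (n + 1),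
          (bernsteinPolynomial R n k).eval p * (p * f (k + 1) + (1 - p) * f k) := by
        rw [mul_sum, mul_sum, ← sum_add_distrib]
        exact sum_congr rfl fun k _ => by ring

theorem eval_nonneg {p : ℝ} (h0 : 0 ≤ p) (h1 : p ≤ 1) (n k : ℕ) :
    0 ≤ (bernsteinPolynomial ℝ n k).eval p := by
  have : 0 ≤ 1 - p := sub_nonneg.2 h1
  simp only [bernsteinPolynomial, eval_mul, eval_natCast, eval_pow, eval_X, eval_sub, eval_one]
  positivity

theorem sum_eval_le_of_le_abs_sub {p : ℝ} (h0 : 0 ≤ p) (h1 : p ≤ 1) {n : ℕ}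
    {s : Finset ℕ} (hs : s ⊆ range (n + 1)) {t : ℝ} (ht : 0 < t)
    (hst : ∀ k ∈ s, t ≤ |(k : ℝ) - n * p|) :
    ∑ k ∈ s, (bernsteinPolynomial ℝ n k).eval p ≤ n * p * (1 - p) / t ^ 2 := by
  have hvar :
      ∑ k ∈ range (n + 1), ((k : ℝ) - n * p) ^ 2 * (bernsteinPolynomial ℝ n k).eval p =
        n * p * (1 - p) := by
    have := congrArg (eval p) (variance ℝ n)
    simp only [eval_finsetSum, eval_mul, eval_pow, eval_sub, eval_X, eval_natCast,
      eval_one, nsmul_eq_mul] at this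
    rw [← this]
    exact sum_congr rfl fun k _ => by ring
  rw [le_div_iff₀ (by positivity), sum_mul, ← hvar]
  calc ∑ k ∈ s, (bernsteinPolynomial ℝ n k).eval p * t ^ 2
      ≤ ∑ k ∈ s, ((k : ℝ) - n * p) ^ 2 * (bernsteinPolynomial ℝ n k).eval p := by
        refine sum_le_sum fun k hk => ?_
        rw [mul_comm, ← sq_abs ((k : ℝ) - n * p)]
        exact mul_le_mul_of_nonneg_right (pow_le_pow_left₀ ht.le (hst k hk) 2)
          (eval_nonneg h0 h1 n k)
    _ ≤ _ := sum_le_sum_of_subset_of_nonneg hs fun k _ _ =>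
        mul_nonneg (sq_nonneg _) (eval_nonneg h0 h1 n k)

end bernsteinPolynomial

theorem binMean_eq_sum_bernstein (p : ℝ) (a : ℕ → ℝ) (n : ℕ) :
    binMean p a n = ∑ k ∈ range (n + 1), (bernsteinPolynomial ℝ n k).eval p * a k := by
  simp [binMean, bernsteinPolynomial]

theorem binMean_succ (p : ℝ) (a : ℕ → ℝ) (n : ℕ) :
    binMean p a (n + 1) = binMean p (fun k => p * a (k + 1) + (1 - p) * a k) n := by
  simp only [binMean_eq_sum_bernstein]
  exact bernsteinPolynomial.sum_eval_succ_mul p a n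

theorem binMean_partialSums_succ (p : ℝ) (a : ℕ → ℝ) (n : ℕ) :
    binMean p (fun k => ∑ i ∈ range k, a i) (n + 1) =
      binMean p (fun k => ∑ i ∈ range k, a i) n + p * binMean p a n := by
  rw [binMean_succ, binMean, binMean, binMean, mul_sum, ← sum_add_distrib]
  refine sum_congr rfl fun k _ => ?_
  rw [sum_range_succ]
  ring

theorem binMean_partialSums (p : ℝ) (a : ℕ → ℝ) (n : ℕ) :
    binMean p (fun k => ∑ i ∈ range k, a i) n = p * ∑ m ∈ range n, binMean p a m := by
  induction n with
  | zero => simp [binMean]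
  | succ n ih => rw [binMean_partialSums_succ, ih, sum_range_succ, mul_add]

section Monotone

variable {p : ℝ} {S : ℕ → ℝ}

theorem mul_one_sub_le_binMean (h0 : 0 ≤ p) (h1 : p ≤ 1) (hS : Monotone S) (hS0 : 0 ≤ S)
    {n M : ℕ} {t : ℝ} (ht : 0 < t) (hM : M + t ≤ n * p) :
    S M * (1 - n * p * (1 - p) / t ^ 2) ≤ binMean p S n := by
  set b := fun k => (bernsteinPolynomial ℝ n k).eval p
  have hb : ∀ k, 0 ≤ b k := bernsteinPolynomial.eval_nonneg h0 h1 n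
  set high := (range (n + 1)).filter (M ≤ ·)
  have hmass : 1 - n * p * (1 - p) / t ^ 2 ≤ ∑ k ∈ high, b k := by
    have hlow :
        ∑ k ∈ (range (n + 1)).filter (¬ M ≤ ·), b k ≤ n * p * (1 - p) / t ^ 2 := by
      refine bernsteinPolynomial.sum_eval_le_of_le_abs_sub h0 h1 (filter_subset _ _) ht
        fun k hk => ?_
      have hkM : (k : ℝ) ≤ M := by exact_mod_cast (not_le.1 (mem_filter.1 hk).2).le
      rw [abs_sub_comm, le_abs]
      left; linarith
    have := sum_filter_add_sum_filter_not (range (n + 1)) (M ≤ ·) b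
    rw [bernsteinPolynomial.sum_eval] at this
    linarith
  calc S M * (1 - n * p * (1 - p) / t ^ 2)
      ≤ ∑ k ∈ high, b k * S M := by
        rw [← sum_mul, mul_comm (S M)]
        exact mul_le_mul_of_nonneg_right hmass (hS0 M)
    _ ≤ ∑ k ∈ high, b k * S k :=
        sum_le_sum fun k hk => mul_le_mul_of_nonneg_left (hS (mem_filter.1 hk).2) (hb k)
    _ ≤ ∑ k ∈ range (n + 1), b k * S k :=
        sum_le_sum_of_subset_of_nonneg (filter_subset _ _) fun k _ _ => mul_nonneg (hb k) (hS0 k)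
    _ = binMean p S n := (binMean_eq_sum_bernstein p S n).symm

theorem binMean_le_add_mul (h0 : 0 ≤ p) (h1 : p ≤ 1) (hS : Monotone S) (hS0 : 0 ≤ S)
    {n M : ℕ} {t : ℝ} (ht : 0 < t) (hM : n * p + t ≤ M) :
    binMean p S n ≤ S M + S n * (n * p * (1 - p) / t ^ 2) := by
  set b := fun k => (bernsteinPolynomial ℝ n k).eval p
  have hb : ∀ k, 0 ≤ b k := bernsteinPolynomial.eval_nonneg h0 h1 n
  set low := (range (n + 1)).filter (· ≤ M)
  set high := (range (n + 1)).filter (¬ · ≤ M)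
  have hlow : ∑ k ∈ low, b k * S k ≤ S M := by
    calc ∑ k ∈ low, b k * S k ≤ ∑ k ∈ low, b k * S M :=
          sum_le_sum fun k hk => mul_le_mul_of_nonneg_left (hS (mem_filter.1 hk).2) (hb k)
      _ ≤ ∑ k ∈ range (n + 1), b k * S M :=
          sum_le_sum_of_subset_of_nonneg (filter_subset _ _) fun k _ _ => mul_nonneg (hb k) (hS0 M)
      _ = S M := by
          rw [← sum_mul, bernsteinPolynomial.sum_eval, one_mul]
  have hhigh : ∑ k ∈ high, b k * S k ≤ S n * (n * p * (1 - p) / t ^ 2) := by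
    have htail : ∑ k ∈ high, b k ≤ n * p * (1 - p) / t ^ 2 := by
      refine bernsteinPolynomial.sum_eval_le_of_le_abs_sub h0 h1 (filter_subset _ _) ht
        fun k hk => ?_
      have hkM : (M : ℝ) ≤ k := by exact_mod_cast (not_le.1 (mem_filter.1 hk).2).le
      rw [le_abs]
      left; linarith
    calc ∑ k ∈ high, b k * S k ≤ ∑ k ∈ high, b k * S n :=
          sum_le_sum fun k hk => mul_le_mul_of_nonneg_left
            (hS (Nat.lt_succ_iff.1 (mem_range.1 (mem_filter.1 hk).1))) (hb k)
      _ ≤ S n * (n * p * (1 - p) / t ^ 2) := by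
          rw [← sum_mul, mul_comm]
          exact mul_le_mul_of_nonneg_left htail (hS0 n)
  rw [binMean_eq_sum_bernstein, ← sum_filter_add_sum_filter_not _ (· ≤ M)]
  exact add_le_add hlow hhigh

end Monotone

section Tauberian

open Topology

variable {p L : ℝ} {S : ℕ → ℝ}

theorem eventually_div_lt_of_tendsto_binMean_div (h1 : p ≤ 1) (hS : Monotone S) (hS0 : 0 ≤ S)
    (hE : Tendsto (fun n => binMean p S n / n) atTop (𝓝 (p * L)))
    {q : ℝ} (hq0 : 0 < q) (hqp : q < p) {c : ℝ} (hc : p * L / q < c) :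
    ∀ᶠ M : ℕ in atTop, S M / M < c := by
  -- `M` lies `(p - q) * n M` below the mean `p * n M` of the weights `b (n M) ·`.
  set n : ℕ → ℕ := fun M => ⌈q⁻¹ * M⌉₊
  have hn_top : Tendsto n atTop atTop := tendsto_nat_ceil_atTop.comp
    (tendsto_natCast_atTop_atTop.const_mul_atTop (inv_pos.2 hq0))
  have hn : Tendsto (fun M : ℕ => (n M : ℝ) / M) atTop (𝓝 q⁻¹) :=
    (tendsto_nat_ceil_mul_div_atTop (inv_nonneg.2 hq0.le)).comp tendsto_natCast_atTop_atTop
  set δ : ℕ → ℝ := fun M => p * (1 - p) / ((p - q) ^ 2 * n M)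
  have hδ : Tendsto δ atTop (𝓝 0) := tendsto_const_nhds.div_atTop
    ((tendsto_natCast_atTop_atTop.comp hn_top).const_mul_atTop (by nlinarith))
  have hlim : Tendsto (fun M => binMean p S (n M) / n M * (n M / M) / (1 - δ M)) atTop
      (𝓝 (p * L * q⁻¹ / (1 - 0))) :=
    ((hE.comp hn_top).mul hn).div (tendsto_const_nhds.sub hδ) (by norm_num)
  rw [sub_zero, div_one, ← div_eq_mul_inv] at hlim
  filter_upwards [hlim.eventually_lt_const hc, hδ.eventually_lt_const one_pos,
    eventually_gt_atTop 0] with M hlt hδ1 hM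
  refine lt_of_le_of_lt ?_ hlt
  have hqn : q⁻¹ * M ≤ n M := Nat.le_ceil _
  have hM0 : (0 : ℝ) < M := by exact_mod_cast hM
  have hn0 : (0 : ℝ) < n M := lt_of_lt_of_le (by positivity) hqn
  have hMq : (M : ℝ) ≤ q * n M := by
    rwa [inv_mul_le_iff₀ hq0] at hqn
  have hbound := mul_one_sub_le_binMean (hq0.trans hqp).le h1 hS hS0 (n := n M) (M := M)
    (t := (p - q) * n M) (by nlinarith) (by linarith)
  rw [show (n M : ℝ) * p * (1 - p) / ((p - q) * n M) ^ 2 = δ M by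
    simp only [δ]; field_simp] at hbound
  rw [div_mul_div_cancel₀ hn0.ne', le_div_iff₀ (by linarith), div_mul_eq_mul_div]
  exact div_le_div_of_nonneg_right hbound hM0.le

theorem eventually_lt_div_of_tendsto_binMean_div (h0 : 0 ≤ p) (h1 : p ≤ 1) (hS : Monotone S)
    (hS0 : 0 ≤ S) (hE : Tendsto (fun n => binMean p S n / n) atTop (𝓝 (p * L)))
    {B : ℝ} (hB : ∀ᶠ n : ℕ in atTop, S n / n ≤ B)
    {q : ℝ} (hpq : p < q) {c : ℝ} (hc : c < p * L / q) :
    ∀ᶠ M : ℕ in atTop, c < S M / M := by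
  have hq0 : 0 < q := h0.trans_lt hpq
  -- `M` lies `(q - p) * n M` above the mean `p * n M` of the weights `b (n M) ·`.
  set n : ℕ → ℕ := fun M => ⌊q⁻¹ * M⌋₊
  have hn_top : Tendsto n atTop atTop := tendsto_nat_floor_mul_atTop _ (inv_pos.2 hq0)
  have hn : Tendsto (fun M : ℕ => (n M : ℝ) / M) atTop (𝓝 q⁻¹) :=
    (tendsto_nat_floor_mul_div_atTop (inv_nonneg.2 hq0.le)).comp tendsto_natCast_atTop_atTop
  set K : ℝ := p * (1 - p) / (q - p) ^ 2
  have hlim : Tendsto (fun M : ℕ => binMean p S (n M) / n M * (n M / M) - B * K / M) atTop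
      (𝓝 (p * L * q⁻¹ - 0)) :=
    ((hE.comp hn_top).mul hn).sub (tendsto_const_nhds.div_atTop tendsto_natCast_atTop_atTop)
  rw [sub_zero, ← div_eq_mul_inv] at hlim
  filter_upwards [hlim.eventually_const_lt hc, hn_top.eventually hB,
    hn_top.eventually_ge_atTop 1, eventually_gt_atTop 0] with M hlt hBM hn1 hM
  refine hlt.trans_le ?_
  have hM0 : (0 : ℝ) < M := by exact_mod_cast hM
  have hn0 : (0 : ℝ) < n M := by exact_mod_cast hn1
  have hqn : (n M : ℝ) ≤ q⁻¹ * M := Nat.floor_le (by positivity)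
  have hMq : q * n M ≤ M := by
    rwa [le_inv_mul_iff₀ hq0] at hqn
  have hbound := binMean_le_add_mul h0 h1 hS hS0 (n := n M) (M := M)
    (t := (q - p) * n M) (by nlinarith) (by linarith)
  rw [show S (n M) * ((n M : ℝ) * p * (1 - p) / ((q - p) * n M) ^ 2) = S (n M) / n M * K by
    simp only [K]; field_simp] at hbound
  have hK : 0 ≤ K := by
    have : 0 ≤ 1 - p := sub_nonneg.2 h1
    positivity
  rw [div_mul_div_cancel₀ hn0.ne', sub_le_iff_le_add, ← add_div]
  gcongr
  linarith [mul_le_mul_of_nonneg_right hBM hK]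

theorem tendsto_div_of_tendsto_binMean_div (hp0 : 0 < p) (hp1 : p ≤ 1) (hS : Monotone S)
    (hS0 : 0 ≤ S) (hE : Tendsto (fun n => binMean p S n / n) atTop (𝓝 (p * L))) :
    Tendsto (fun n => S n / n) atTop (𝓝 L) := by
  have hq : Tendsto (fun q => p * L / q) (𝓝 p) (𝓝 L) := by
    have := (tendsto_const_nhds (x := p * L)).div tendsto_id hp0.ne'
    rwa [mul_div_cancel_left₀ L hp0.ne'] at this
  have upper : ∀ c > L, ∀ᶠ M : ℕ in atTop, S M / M < c := fun c hc => by
    obtain ⟨q, hqc, hq0, hqp⟩ :=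
      (((hq.mono_left nhdsWithin_le_nhds).eventually (gt_mem_nhds hc)).and
        (Ioo_mem_nhdsLT hp0)).exists
    exact eventually_div_lt_of_tendsto_binMean_div hp1 hS hS0 hE hq0 hqp hqc
  refine tendsto_order.2 ⟨fun c hc => ?_, upper⟩
  obtain ⟨q, hqc, hpq⟩ := (((hq.mono_left nhdsWithin_le_nhds).eventually (lt_mem_nhds hc)).and
    (self_mem_nhdsWithin : Set.Ioi p ∈ 𝓝[>] p)).exists
  exact eventually_lt_div_of_tendsto_binMean_div hp0.le hp1 hS hS0 hE
    ((upper (L + 1) (lt_add_one L)).mono fun _ h => h.le) hpq hqc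

end Tauberian

theorem binomial_mean_tendsto_imp_cesaro_tendsto
    (a : ℕ → ℝ) (ha : ∀ n, 0 ≤ a n) (p : ℝ) (hp0 : 0 < p) (hp1 : p < 1) (l : ℝ)
    (h : Tendsto (binMean p a) atTop (nhds l)) :
    Tendsto (cesaroMean a) atTop (nhds l) := by
  set S : ℕ → ℝ := fun k => ∑ i ∈ range k, a i
  have hS : Monotone S := monotone_nat_of_le_succ fun k => by
    simpa [S, sum_range_succ] using ha k
  have hS0 : 0 ≤ S := fun k => sum_nonneg fun i _ => ha i
  have hE : Tendsto (fun n => binMean p S n / n) atTop (nhds (p * l)) := by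
    simpa [S, binMean_partialSums, div_eq_inv_mul, mul_left_comm] using h.cesaro.const_mul p
  have hlim := (tendsto_add_atTop_iff_nat 1).2
    (tendsto_div_of_tendsto_binMean_div hp0 hp1.le hS hS0 hE)
  refine hlim.congr fun n => ?_
  simp [S, cesaroMean, div_eq_inv_mul]
end

section
/- Let (a_n)_{n≥0} be a sequence of non-negative real numbers and let p ∈ (0,1). If the sequence of p-binomial means (a^p_n)_{n≥0} tends to infinity, then the sequence of arithmetic means (a*_n)_{n≥0} also tends to infinity. -/
open Filter Finset

lemma aux_tail_bound (p : ℝ) (hp0 : 0 < p) (hp1 : p < 1) (i m : ℕ) :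
    ∑ n ∈ Finset.Ico i (m + 1), ((n.choose i : ℝ) * p ^ i * (1 - p) ^ (n - i)) ≤ 1 / p := by
  have hq : ‖(1 - p)‖ < 1 := by
    rw [Real.norm_eq_abs, abs_lt]; constructor <;> linarith
  have hs := hasSum_choose_mul_geometric_of_norm_lt_one (𝕜 := ℝ) i hq
  have h1p : (1 : ℝ) - (1 - p) = p := by ring
  rw [h1p] at hs
  rcases le_or_gt i (m + 1) with him | him
  · rw [Finset.sum_Ico_eq_sum_range]
    have heq : ∀ k ∈ Finset.range (m + 1 - i),
        ((i + k).choose i : ℝ) * p ^ i * (1 - p) ^ (i + k - i)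
          = p ^ i * (((k + i).choose i : ℝ) * (1 - p) ^ k) := by
      intro k _
      rw [Nat.add_sub_cancel_left, Nat.add_comm i k]; ring
    rw [Finset.sum_congr rfl heq, ← Finset.mul_sum]
    have hle : ∑ k ∈ Finset.range (m + 1 - i), ((k + i).choose i : ℝ) * (1 - p) ^ k
        ≤ 1 / p ^ (i + 1) := by
      refine sum_le_hasSum _ (fun k _ => ?_) hs
      exact mul_nonneg (by positivity) (pow_nonneg (by linarith) k)
    calc p ^ i * ∑ k ∈ Finset.range (m + 1 - i), ((k + i).choose i : ℝ) * (1 - p) ^ k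
        ≤ p ^ i * (1 / p ^ (i + 1)) := by
          exact mul_le_mul_of_nonneg_left hle (by positivity)
      _ = 1 / p := by field_simp; ring
  · rw [Finset.Ico_eq_empty (by omega), Finset.sum_empty]
    positivity

lemma aux_sum_binMean_le (a : ℕ → ℝ) (ha : ∀ n, 0 ≤ a n) (p : ℝ)
    (hp0 : 0 < p) (hp1 : p < 1) (m : ℕ) :
    ∑ n ∈ Finset.range (m + 1), binMean p a n
      ≤ (1 / p) * ∑ i ∈ Finset.range (m + 1), a i := by
  unfold binMean
  rw [Finset.sum_comm' (t' := Finset.range (m + 1))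
      (s' := fun i => Finset.Ico i (m + 1))
      (by intro n i; simp only [Finset.mem_range, Finset.mem_Ico]; omega)]
  rw [Finset.mul_sum]
  refine Finset.sum_le_sum fun i _ => ?_
  have : ∑ n ∈ Finset.Ico i (m + 1), (n.choose i : ℝ) * p ^ i * (1 - p) ^ (n - i) * a i
      = (∑ n ∈ Finset.Ico i (m + 1), (n.choose i : ℝ) * p ^ i * (1 - p) ^ (n - i)) * a i := by
    rw [Finset.sum_mul]
  rw [this, mul_comm (1 / p) (a i)]
  exact mul_le_mul_of_nonneg_right (aux_tail_bound p hp0 hp1 i m) (ha i) |>.trans_eq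
    (mul_comm _ _)

lemma aux_cesaro_atTop (g : ℕ → ℝ) (hg : ∀ n, 0 ≤ g n)
    (h : Tendsto g atTop atTop) : Tendsto (cesaroMean g) atTop atTop := by
  rw [tendsto_atTop]
  intro M
  set K : ℝ := 2 * |M| + 2 with hK
  obtain ⟨N, hN⟩ := eventually_atTop.1 (h.eventually_ge_atTop K)
  filter_upwards [eventually_ge_atTop (2 * N)] with m hm
  have h1 : (0 : ℝ) < (m : ℝ) + 1 := by positivity
  have hsub : Finset.Ico N (m + 1) ⊆ Finset.range (m + 1) := by
    intro x hx; simp only [Finset.mem_Ico, Finset.mem_range] at *; omega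
  have hsum : ((m + 1 - N : ℕ) : ℝ) * K ≤ ∑ i ∈ Finset.range (m + 1), g i := by
    calc ((m + 1 - N : ℕ) : ℝ) * K = ∑ _i ∈ Finset.Ico N (m + 1), K := by
          rw [Finset.sum_const, Nat.card_Ico, nsmul_eq_mul]
      _ ≤ ∑ i ∈ Finset.Ico N (m + 1), g i :=
          Finset.sum_le_sum fun i hi => hN i (Finset.mem_Ico.1 hi).1
      _ ≤ ∑ i ∈ Finset.range (m + 1), g i :=
          Finset.sum_le_sum_of_subset_of_nonneg hsub fun i _ _ => hg i
  have hcard : ((m : ℝ) + 1) / 2 ≤ ((m + 1 - N : ℕ) : ℝ) := by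
    have : (m + 1 - N : ℕ) = m + 1 - N := rfl
    have hNc : ((m + 1 - N : ℕ) : ℝ) = (m : ℝ) + 1 - N := by
      push_cast [Nat.cast_sub (by omega : N ≤ m + 1)]; ring
    rw [hNc]
    have : (N : ℝ) * 2 ≤ (m : ℝ) := by exact_mod_cast by omega
    linarith
  have hK0 : 0 ≤ K := by positivity
  have : ((m : ℝ) + 1) / 2 * K ≤ ∑ i ∈ Finset.range (m + 1), g i :=
    le_trans (mul_le_mul_of_nonneg_right hcard hK0) hsum
  have : K / 2 ≤ cesaroMean g m := by
    unfold cesaroMean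
    rw [one_div, inv_mul_eq_div, le_div_iff₀ h1]
    nlinarith [this]
  have hMK : M ≤ K / 2 := by
    have := le_abs_self M; simp only [hK]; linarith
  linarith

theorem binomial_mean_tendsto_atTop_imp_cesaro_tendsto_atTop
    (a : ℕ → ℝ) (ha : ∀ n, 0 ≤ a n) (p : ℝ) (hp0 : 0 < p) (hp1 : p < 1)
    (h : Tendsto (binMean p a) atTop atTop) :
    Tendsto (cesaroMean a) atTop atTop := by
  have hg : ∀ n, 0 ≤ binMean p a n := by
    intro n
    apply Finset.sum_nonneg
    intro i hi
    have hi' : i ≤ n := by simp only [Finset.mem_range] at hi; omega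
    have h1p : (0:ℝ) ≤ 1 - p := by linarith
    exact mul_nonneg (mul_nonneg (mul_nonneg (by positivity) (by positivity))
      (pow_nonneg h1p _)) (ha i)
  have hc : Tendsto (cesaroMean (binMean p a)) atTop atTop := aux_cesaro_atTop _ hg h
  have hmono : ∀ m, p * cesaroMean (binMean p a) m ≤ cesaroMean a m := by
    intro m
    unfold cesaroMean
    have h1 : (0 : ℝ) < (m : ℝ) + 1 := by positivity
    have := aux_sum_binMean_le a ha p hp0 hp1 m
    calc p * (1 / ((m : ℝ) + 1) * ∑ n ∈ Finset.range (m + 1), binMean p a n)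
        ≤ p * (1 / ((m : ℝ) + 1) * ((1 / p) * ∑ i ∈ Finset.range (m + 1), a i)) := by
          apply mul_le_mul_of_nonneg_left _ hp0.le
          apply mul_le_mul_of_nonneg_left this (by positivity)
      _ = 1 / ((m : ℝ) + 1) * ∑ i ∈ Finset.range (m + 1), a i := by
          field_simp
  exact tendsto_atTop_mono hmono (hc.const_mul_atTop hp0)
end

section
/- Let 0 < p < q < 1 and let (a_n)_{n≥0} be a sequence of real numbers. If the sequence of q-binomial means (a^q_n)_{n≥0} converges to a real number a, then the sequence of p-binomial means (a^p_n)_{n≥0} also converges to a. -/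
/-!
Binomial means compose multiplicatively: taking the `r`-binomial mean of the `q`-binomial means
gives the `r * q`-binomial mean (thinning a Binomial(n, r) count by independent `q`-coins gives a
Binomial(n, r q) count). Hence the `p`-means are the `p / q`-means of the `q`-means, and for
`0 < p / q < 1` the binomial weights form a regular (Toeplitz) summation method: they are
nonnegative, sum to one, and each fixed column tends to zero, so they preserve limits.
-/

open Filter Finset Topology

section Toeplitz

variable {w : ℕ → ℕ → ℝ}

theorem tendsto_sum_range_mul_of_tendsto_zero (hw_nonneg : ∀ n i, 0 ≤ w n i)
    (hw_sum : ∀ n, ∑ i ∈ range (n + 1), w n i ≤ 1)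
    (hw_lim : ∀ i, Tendsto (fun n ↦ w n i) atTop (𝓝 0)) {c : ℕ → ℝ}
    (hc : Tendsto c atTop (𝓝 0)) :
    Tendsto (fun n ↦ ∑ i ∈ range (n + 1), w n i * c i) atTop (𝓝 0) := by
  have hbound : ∀ n, ‖∑ i ∈ range (n + 1), w n i * c i‖ ≤ ∑ i ∈ range (n + 1), w n i * |c i| :=
    fun n ↦ (norm_sum_le _ _).trans_eq <| sum_congr rfl fun i _ ↦ by
      rw [norm_mul, Real.norm_of_nonneg (hw_nonneg n i), Real.norm_eq_abs]
  refine squeeze_zero_norm hbound (Metric.tendsto_nhds.2 fun ε hε ↦ ?_)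
  obtain ⟨N, hN⟩ := Metric.tendsto_atTop.1 hc (ε / 2) (half_pos hε)
  have hhead : Tendsto (fun n ↦ ∑ i ∈ range N, w n i * |c i|) atTop (𝓝 0) := by
    simpa using tendsto_finsetSum (range N) fun i _ ↦ (hw_lim i).mul_const |c i|
  filter_upwards [hhead.eventually (gt_mem_nhds (half_pos hε))] with n hn
  have hlow : ∑ i ∈ (range (n + 1)).filter (· < N), w n i * |c i|
      ≤ ∑ i ∈ range N, w n i * |c i| :=
    sum_le_sum_of_subset_of_nonneg (fun i hi ↦ mem_range.2 (mem_filter.1 hi).2)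
      fun i _ _ ↦ mul_nonneg (hw_nonneg n i) (abs_nonneg _)
  have hhigh : ∑ i ∈ (range (n + 1)).filter (¬ · < N), w n i * |c i| ≤ ε / 2 :=
    calc ∑ i ∈ (range (n + 1)).filter (¬ · < N), w n i * |c i|
        ≤ ∑ i ∈ (range (n + 1)).filter (¬ · < N), w n i * (ε / 2) :=
          sum_le_sum fun i hi ↦ by
            have hi : N ≤ i := not_lt.1 (mem_filter.1 hi).2
            simpa [Real.dist_eq] using mul_le_mul_of_nonneg_left (hN i hi).le (hw_nonneg n i)
      _ ≤ ∑ i ∈ range (n + 1), w n i * (ε / 2) :=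
          sum_le_sum_of_subset_of_nonneg (filter_subset _ _)
            fun i _ _ ↦ mul_nonneg (hw_nonneg n i) (half_pos hε).le
      _ ≤ ε / 2 := by rw [← sum_mul]; exact mul_le_of_le_one_left (half_pos hε).le (hw_sum n)
  have hnonneg : 0 ≤ ∑ i ∈ range (n + 1), w n i * |c i| :=
    sum_nonneg fun i _ ↦ mul_nonneg (hw_nonneg n i) (abs_nonneg _)
  rw [Real.dist_eq, sub_zero, abs_of_nonneg hnonneg, ← sum_filter_add_sum_filter_not _ (· < N)]
  linarith

theorem tendsto_sum_range_mul_of_tendsto (hw_nonneg : ∀ n i, 0 ≤ w n i)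
    (hw_sum : ∀ n, ∑ i ∈ range (n + 1), w n i = 1)
    (hw_lim : ∀ i, Tendsto (fun n ↦ w n i) atTop (𝓝 0)) {b : ℕ → ℝ} {l : ℝ}
    (hb : Tendsto b atTop (𝓝 l)) :
    Tendsto (fun n ↦ ∑ i ∈ range (n + 1), w n i * b i) atTop (𝓝 l) := by
  have hc : Tendsto (fun i ↦ b i - l) atTop (𝓝 0) := by simpa using hb.sub_const l
  have := (tendsto_sum_range_mul_of_tendsto_zero hw_nonneg (fun n ↦ (hw_sum n).le) hw_lim hc)
  rw [← zero_add l]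
  refine (this.add_const l).congr fun n ↦ ?_
  simp only [mul_sub, sum_sub_distrib, ← sum_mul, hw_sum, one_mul, sub_add_cancel]

end Toeplitz

section BinomialWeights

variable {r : ℝ}

def binWeight (r : ℝ) (n i : ℕ) : ℝ :=
  n.choose i * r ^ i * (1 - r) ^ (n - i)

theorem binMean_eq_sum_binWeight (r : ℝ) (a : ℕ → ℝ) (n : ℕ) :
    binMean r a n = ∑ i ∈ range (n + 1), binWeight r n i * a i :=
  rfl

theorem binWeight_nonneg (hr0 : 0 ≤ r) (hr1 : r ≤ 1) (n i : ℕ) : 0 ≤ binWeight r n i := by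
  unfold binWeight
  have : 0 ≤ 1 - r := sub_nonneg.2 hr1
  positivity

theorem binWeight_eq_zero_of_lt (r : ℝ) {n i : ℕ} (h : n < i) : binWeight r n i = 0 := by
  simp [binWeight, Nat.choose_eq_zero_of_lt h]

theorem sum_binWeight (r : ℝ) (n : ℕ) : ∑ i ∈ range (n + 1), binWeight r n i = 1 := by
  calc ∑ i ∈ range (n + 1), binWeight r n i = (r + (1 - r)) ^ n := by
        rw [add_pow]; exact sum_congr rfl fun i _ ↦ by rw [binWeight]; ring
    _ = 1 := by rw [add_sub_cancel, one_pow]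

theorem tendsto_binWeight_atTop (hr0 : 0 < r) (hr1 : r < 1) (i : ℕ) :
    Tendsto (fun n ↦ binWeight r n i) atTop (𝓝 0) := by
  have h1r : 0 < 1 - r := sub_pos.2 hr1
  have hlim :
      Tendsto (fun n : ℕ ↦ (r / (1 - r)) ^ i * ((n : ℝ) ^ i * (1 - r) ^ n)) atTop (𝓝 0) := by
    simpa only [mul_zero] using
      (tendsto_pow_const_mul_const_pow_of_lt_one i h1r.le (by linarith)).const_mul
        ((r / (1 - r)) ^ i)
  refine squeeze_zero' (Eventually.of_forall fun n ↦ binWeight_nonneg hr0.le hr1.le n i) ?_ hlim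
  filter_upwards [eventually_ge_atTop i] with n hn
  have hsplit : binWeight r n i = (r / (1 - r)) ^ i * (n.choose i * (1 - r) ^ n) := by
    rw [binWeight, div_pow, ← Nat.sub_add_cancel hn, pow_add, Nat.add_sub_cancel]
    field_simp
  rw [hsplit]
  gcongr
  exact_mod_cast Nat.choose_le_pow n i

theorem binWeight_add_mul_binWeight (r q : ℝ) (n i j : ℕ) :
    binWeight r n (i + j) * binWeight q (i + j) i
      = n.choose i * (r * q) ^ i *
          ((r * (1 - q)) ^ j * (1 - r) ^ (n - i - j) * (n - i).choose j) := by
  have hchoose : (n.choose (i + j) * (i + j).choose i : ℝ) = n.choose i * (n - i).choose j := by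
    have := Nat.choose_mul (n := n) (Nat.le_add_right i j)
    rw [Nat.add_sub_cancel_left] at this
    exact_mod_cast this
  simp only [binWeight, Nat.add_sub_cancel_left, Nat.sub_sub, mul_pow]
  linear_combination (r ^ (i + j) * (1 - r) ^ (n - (i + j)) * q ^ i * (1 - q) ^ j) * hchoose

theorem sum_binWeight_mul_binWeight (r q : ℝ) (n i : ℕ) :
    ∑ k ∈ range (n + 1), binWeight r n k * binWeight q k i = binWeight (r * q) n i := by
  rcases lt_or_ge n i with hni | hin
  · rw [binWeight_eq_zero_of_lt _ hni]
    exact sum_eq_zero fun k hk ↦ by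
      rw [binWeight_eq_zero_of_lt q (show k < i by rw [mem_range] at hk; omega), mul_zero]
  have hvanish : ∑ k ∈ Ico i (n + 1), binWeight r n k * binWeight q k i
      = ∑ k ∈ range (n + 1), binWeight r n k * binWeight q k i :=
    sum_subset (fun k hk ↦ by rw [mem_Ico] at hk; rw [mem_range]; omega) fun k hk hk' ↦ by
      rw [mem_range] at hk; rw [mem_Ico] at hk'
      rw [binWeight_eq_zero_of_lt q (show k < i by omega), mul_zero]
  rw [← hvanish, sum_Ico_eq_sum_range, show n + 1 - i = n - i + 1 by omega,
    sum_congr rfl fun j _ ↦ binWeight_add_mul_binWeight r q n i j, ← mul_sum,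
    ← add_pow, binWeight, show r * (1 - q) + (1 - r) = 1 - r * q by ring]

theorem binMean_binMean (r q : ℝ) (a : ℕ → ℝ) (n : ℕ) :
    binMean r (binMean q a) n = binMean (r * q) a n := by
  have hinner : ∀ k ∈ range (n + 1), binMean q a k = ∑ i ∈ range (n + 1), binWeight q k i * a i :=
    fun k hk ↦ (binMean_eq_sum_binWeight q a k).trans <|
      sum_subset (range_subset_range.2 (by rw [mem_range] at hk; omega)) fun i _ hi ↦ by
        rw [binWeight_eq_zero_of_lt q (show k < i by simpa using hi), zero_mul]
  calc binMean r (binMean q a) n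
      = ∑ k ∈ range (n + 1), ∑ i ∈ range (n + 1), binWeight r n k * (binWeight q k i * a i) :=
        sum_congr rfl fun k hk ↦ by rw [hinner k hk, mul_sum]; rfl
    _ = ∑ i ∈ range (n + 1), (∑ k ∈ range (n + 1), binWeight r n k * binWeight q k i) * a i := by
        rw [sum_comm]; simp only [sum_mul, mul_assoc]
    _ = binMean (r * q) a n := by simp only [sum_binWeight_mul_binWeight]; rfl

theorem tendsto_binMean (hr0 : 0 < r) (hr1 : r < 1) {b : ℕ → ℝ} {l : ℝ}
    (hb : Tendsto b atTop (𝓝 l)) : Tendsto (binMean r b) atTop (𝓝 l) :=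
  tendsto_sum_range_mul_of_tendsto (binWeight_nonneg hr0.le hr1.le) (sum_binWeight r)
    (tendsto_binWeight_atTop hr0 hr1) hb

end BinomialWeights

theorem binMean_q_tendsto_imp_binMean_p_tendsto_general
    (p q : ℝ) (hp0 : 0 < p) (hpq : p < q)
    (a : ℕ → ℝ) (l : ℝ) (h : Tendsto (binMean q a) atTop (nhds l)) :
    Tendsto (binMean p a) atTop (nhds l) := by
  have hq0 : 0 < q := hp0.trans hpq
  have hmean : binMean (p / q) (binMean q a) = binMean p a := by
    ext n
    rw [binMean_binMean, div_mul_cancel₀ p hq0.ne']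
  simpa only [hmean] using tendsto_binMean (div_pos hp0 hq0) ((div_lt_one hq0).2 hpq) h

theorem binMean_q_tendsto_imp_binMean_p_tendsto
    (p q : ℝ) (hp0 : 0 < p) (hpq : p < q) (hq1 : q < 1)
    (a : ℕ → ℝ) (l : ℝ) (h : Tendsto (binMean q a) atTop (nhds l)) :
    Tendsto (binMean p a) atTop (nhds l) :=
  binMean_q_tendsto_imp_binMean_p_tendsto_general p q hp0 hpq a l h
end

section
/- For all 0 < p < q < 1, there exists a sequence (a_n)_{n≥0} of real numbers such that the sequence of p-binomial means (a^p_n)_{n≥0} converges to 0, but the sequence of q-binomial means (a^q_n)_{n≥0} does not converge. -/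
/-!
Binomial means send the geometric sequence `cⁱ` to the geometric sequence `(p c + 1 - p)ⁿ`.
For `c = 1 - 1/p - 1/q` the two ratios are `p c + 1 - p = -p/q` and `q c + 1 - q = -q/p`,
so when `0 < p < q` the `p`-means of `cⁱ` tend to `0` while the `q`-means blow up.
-/

open Filter Finset

lemma binMean_geometric (p c : ℝ) (n : ℕ) :
    binMean p (fun i => c ^ i) n = (p * c + (1 - p)) ^ n := by
  rw [binMean, add_pow]
  refine Finset.sum_congr rfl fun i _ => ?_
  rw [mul_pow]
  ring

lemma binMean_geometric_one_sub_inv_add_inv {p q : ℝ} (hp : p ≠ 0) (hq : q ≠ 0) (n : ℕ) :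
    binMean p (fun i => (1 - (1 / p + 1 / q)) ^ i) n = (-(p / q)) ^ n := by
  rw [binMean_geometric]
  congr 1
  field_simp
  ring

lemma not_tendsto_pow_of_one_lt_abs {r : ℝ} (hr : 1 < |r|) :
    ¬ ∃ l : ℝ, Tendsto (fun n : ℕ => r ^ n) atTop (nhds l) := by
  rintro ⟨l, hl⟩
  have habs : Tendsto (fun n : ℕ => |r ^ n|) atTop atTop := by
    simpa only [abs_pow] using tendsto_pow_atTop_atTop_of_one_lt hr
  exact not_tendsto_nhds_of_tendsto_atTop habs _ hl.abs

theorem exists_seq_binMean_p_tendsto_zero_binMean_q_diverges_general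
    (p q : ℝ) (hp0 : 0 < p) (hpq : p < q) :
    ∃ a : ℕ → ℝ, Tendsto (binMean p a) atTop (nhds 0) ∧
      ¬ ∃ l : ℝ, Tendsto (binMean q a) atTop (nhds l) := by
  have hq0 : 0 < q := hp0.trans hpq
  refine ⟨fun i => (1 - (1 / p + 1 / q)) ^ i, ?_, ?_⟩
  · rw [funext (binMean_geometric_one_sub_inv_add_inv hp0.ne' hq0.ne')]
    apply tendsto_pow_atTop_nhds_zero_of_abs_lt_one
    rwa [abs_neg, abs_of_pos (div_pos hp0 hq0), div_lt_one hq0]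
  · rw [add_comm (1 / p), funext (binMean_geometric_one_sub_inv_add_inv hq0.ne' hp0.ne')]
    apply not_tendsto_pow_of_one_lt_abs
    rwa [abs_neg, abs_of_pos (div_pos hq0 hp0), one_lt_div hp0]

theorem exists_seq_binMean_p_tendsto_zero_binMean_q_diverges
    (p q : ℝ) (hp0 : 0 < p) (hpq : p < q) (hq1 : q < 1) :
    ∃ a : ℕ → ℝ, Tendsto (binMean p a) atTop (nhds 0) ∧
      ¬ ∃ l : ℝ, Tendsto (binMean q a) atTop (nhds l) :=
  exists_seq_binMean_p_tendsto_zero_binMean_q_diverges_general p q hp0 hpq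
end

section
/- Let (a_n)_{n≥0} be a sequence of non-negative real numbers and let p ∈ (0,1). If the sequence of p-binomial means (a^p_n)_{n≥0} converges to a real number a, then a_n = O(√n), i.e. there exists a constant C > 0 such that a_n ≤ C√n for all sufficiently large n. -/
open Filter Finset

noncomputable def bw (p : ℝ) (m i : ℕ) : ℝ := (m.choose i : ℝ) * p ^ i * (1 - p) ^ (m - i)

lemma bw_sum (p : ℝ) (m : ℕ) : ∑ i ∈ range (m + 1), bw p m i = 1 := by
  have := bernsteinPolynomial.sum ℝ m
  have h2 := congrArg (Polynomial.eval p) this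
  simpa [Polynomial.eval_finset_sum, bernsteinPolynomial, bw, mul_comm] using h2

lemma bw_var (p : ℝ) (m : ℕ) :
    ∑ i ∈ range (m + 1), (m * p - i) ^ 2 * bw p m i = m * p * (1 - p) := by
  have := bernsteinPolynomial.variance ℝ m
  have h2 := congrArg (Polynomial.eval p) this
  simpa [Polynomial.eval_finset_sum, bernsteinPolynomial, bw, nsmul_eq_mul, mul_comm,
    mul_assoc, mul_left_comm] using h2

lemma bw_pos {p : ℝ} (hp0 : 0 < p) (hp1 : p < 1) {m i : ℕ} (hi : i ≤ m) : 0 < bw p m i := by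
  have hC : (0:ℝ) < m.choose i := by exact_mod_cast Nat.choose_pos hi
  have h1 : (0:ℝ) < 1 - p := by linarith
  exact mul_pos (mul_pos hC (pow_pos hp0 i)) (pow_pos h1 _)

lemma bw_ratio (p : ℝ) {m i : ℕ} (hi : i < m) :
    ((i:ℝ) + 1) * (1 - p) * bw p m (i+1) = ((m:ℝ) - i) * p * bw p m i := by
  have hc := Nat.choose_succ_right_eq m i
  have hcr : (m.choose (i+1) : ℝ) * (i+1) = (m.choose i : ℝ) * ((m:ℝ) - i) := by
    have : ((m - i : ℕ) : ℝ) = (m:ℝ) - i := by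
      rw [Nat.cast_sub hi.le]
    rw [← this]; exact_mod_cast congrArg (Nat.cast (R := ℝ)) hc
  have hpow : (1 - p) ^ (m - i) = (1 - p) ^ (m - (i+1)) * (1 - p) := by
    rw [← pow_succ]
    congr 1
    omega
  unfold bw
  rw [hpow]
  linear_combination ((1 - p) * p^(i+1) * (1-p)^(m-(i+1))) * hcr

lemma bw_up {p : ℝ} (hp0 : 0 < p) (hp1 : p < 1) {m i : ℕ} (hi : i < m)
    (hc : (i:ℝ) + 1 ≤ p * (m + 1)) : bw p m i ≤ bw p m (i+1) := by
  have hr := bw_ratio p hi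
  have h1 := bw_pos hp0 hp1 hi.le
  have h2 := bw_pos hp0 hp1 (Nat.succ_le_of_lt hi)
  have hkey : ((i:ℝ)+1) * (1-p) ≤ ((m:ℝ) - i) * p := by nlinarith
  have hq : (0:ℝ) < 1 - p := by linarith
  have hpos : (0:ℝ) < ((i:ℝ)+1) * (1-p) := by
    apply mul_pos _ hq
    positivity
  nlinarith

lemma bw_down {p : ℝ} (hp0 : 0 < p) (hp1 : p < 1) {m i : ℕ} (hi : i < m)
    (hc : p * (m + 1) ≤ (i:ℝ) + 1) : bw p m (i+1) ≤ bw p m i := by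
  have hr := bw_ratio p hi
  have h1 := bw_pos hp0 hp1 hi.le
  have h2 := bw_pos hp0 hp1 (Nat.succ_le_of_lt hi)
  have hkey : ((m:ℝ) - i) * p ≤ ((i:ℝ)+1) * (1-p) := by nlinarith
  have hq : (0:ℝ) < 1 - p := by linarith
  have hpos : (0:ℝ) < ((i:ℝ)+1) * (1-p) := by
    apply mul_pos _ hq
    positivity
  nlinarith

lemma bw_mode {p : ℝ} (hp0 : 0 < p) (hp1 : p < 1) {m n : ℕ} (hnm : n ≤ m)
    (hn1 : (n:ℝ) ≤ p * (m + 1)) (hn2 : p * (m + 1) ≤ (n:ℝ) + 1) :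
    ∀ i ≤ m, bw p m i ≤ bw p m n := by
  have up : ∀ j : ℕ, j ≤ n → bw p m (n - j) ≤ bw p m n := by
    intro j
    induction j with
    | zero => simp
    | succ k ih =>
      intro hk
      have h1 : n - (k+1) < m := by omega
      have h2 : ((n - (k+1) : ℕ) : ℝ) + 1 ≤ p * (m+1) := by
        have : ((n - (k+1) : ℕ) : ℝ) + 1 ≤ (n:ℝ) := by
          have : (n - (k+1) : ℕ) + 1 ≤ n := by omega
          exact_mod_cast this
        linarith
      have := bw_up hp0 hp1 h1 h2
      have he : n - (k+1) + 1 = n - k := by omega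
      rw [he] at this
      exact this.trans (ih (by omega))
  have down : ∀ j : ℕ, n + j ≤ m → bw p m (n + j) ≤ bw p m n := by
    intro j
    induction j with
    | zero => simp
    | succ k ih =>
      intro hk
      have h1 : n + k < m := by omega
      have h2 : p * (m+1) ≤ ((n + k : ℕ) : ℝ) + 1 := by
        push_cast; linarith [Nat.cast_nonneg (α := ℝ) k]
      have := bw_down hp0 hp1 h1 h2
      have he : n + k + 1 = n + (k+1) := by omega
      rw [he] at this
      exact this.trans (ih (by omega))
  intro i him
  rcases le_or_gt i n with hin | hni
  · have := up (n - i) (by omega)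
    rwa [Nat.sub_sub_self hin] at this
  · have := down (i - n) (by omega)
    rwa [Nat.add_sub_cancel' hni.le] at this

lemma bw_mode_lb {p : ℝ} (hp0 : 0 < p) (hp1 : p < 1) {m n : ℕ} (hm : 1 ≤ m) (hnm : n ≤ m)
    (hn1 : (n:ℝ) ≤ p * (m + 1)) (hn2 : p * (m + 1) ≤ (n:ℝ) + 1) :
    3/4 ≤ (4 * Real.sqrt ((m:ℝ) * p * (1-p)) + 1) * bw p m n := by
  set V : ℝ := (m:ℝ) * p * (1-p) with hV
  have hq : (0:ℝ) < 1 - p := by linarith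
  have hVpos : 0 < V := by
    have hm' : (0:ℝ) < m := by exact_mod_cast hm
    positivity
  set T : ℝ := 2 * Real.sqrt V with hT
  have hTpos : 0 < T := by positivity
  have hT2 : T^2 = 4 * V := by
    rw [hT, mul_pow, Real.sq_sqrt hVpos.le]; ring
  set W : Finset ℕ := (range (m+1)).filter (fun i : ℕ => |(i:ℝ) - m*p| ≤ T) with hW
  -- tail bound
  have tail : ∑ i ∈ (range (m+1)).filter (fun i : ℕ => ¬ |(i:ℝ) - m*p| ≤ T), bw p m i ≤ 1/4 := by
    have h1 : ∀ i ∈ (range (m+1)).filter (fun i : ℕ => ¬ |(i:ℝ) - m*p| ≤ T),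
        bw p m i ≤ ((m:ℝ) * p - i)^2 * bw p m i / T^2 := by
      intro i hi
      simp only [mem_filter, mem_range, not_le] at hi
      obtain ⟨him, habs⟩ := hi
      have hb := bw_pos hp0 hp1 (Nat.lt_succ_iff.mp him)
      have h2 : T^2 ≤ ((m:ℝ)*p - i)^2 := by
        have := abs_le_abs_of_nonneg hTpos.le habs.le
        calc T^2 ≤ |(i:ℝ) - m*p|^2 := by nlinarith [abs_nonneg ((i:ℝ) - m*p)]
          _ = ((m:ℝ)*p - i)^2 := by rw [sq_abs]; ring
      rw [le_div_iff₀ (by positivity)]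
      nlinarith
    calc ∑ i ∈ (range (m+1)).filter (fun i : ℕ => ¬ |(i:ℝ) - m*p| ≤ T), bw p m i
        ≤ ∑ i ∈ (range (m+1)).filter (fun i : ℕ => ¬ |(i:ℝ) - m*p| ≤ T),
            ((m:ℝ) * p - i)^2 * bw p m i / T^2 := Finset.sum_le_sum h1
      _ ≤ ∑ i ∈ range (m+1), ((m:ℝ) * p - i)^2 * bw p m i / T^2 := by
          apply Finset.sum_le_sum_of_subset_of_nonneg (Finset.filter_subset _ _)
          intro i hi _
          have hb := bw_pos hp0 hp1 (Nat.lt_succ_iff.mp (mem_range.mp hi))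
          positivity
      _ = (∑ i ∈ range (m+1), ((m:ℝ) * p - i)^2 * bw p m i) / T^2 := by
          rw [← Finset.sum_div]
      _ = V / T^2 := by rw [bw_var]
      _ = 1/4 := by rw [hT2]; field_simp
  -- window sum ≥ 3/4
  have hsplit := Finset.sum_filter_add_sum_filter_not (range (m+1))
    (fun i : ℕ => |(i:ℝ) - m*p| ≤ T) (bw p m)
  rw [bw_sum] at hsplit
  have window : 3/4 ≤ ∑ i ∈ W, bw p m i := by
    rw [hW]; linarith
  -- card bound
  set A : ℕ := ⌈(m:ℝ)*p - T⌉₊ with hA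
  set B : ℕ := ⌊(m:ℝ)*p + T⌋₊ with hB
  have hsub : W ⊆ Finset.Icc A B := by
    intro i hi
    simp only [hW, mem_filter, mem_range] at hi
    obtain ⟨_, habs⟩ := hi
    rw [abs_le] at habs
    rw [Finset.mem_Icc]
    constructor
    · rw [hA]; exact Nat.ceil_le.mpr (by linarith)
    · rw [hB]; exact Nat.le_floor (by linarith)
  have hcard : (W.card : ℝ) ≤ 2*T + 1 := by
    have h1 : (W.card : ℝ) ≤ ((Finset.Icc A B).card : ℝ) := by
      exact_mod_cast Finset.card_le_card hsub
    rcases le_or_gt A (B+1) with hAB | hAB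
    · have h2 : (Finset.Icc A B).card = B + 1 - A := Nat.card_Icc A B
      have h3 : ((Finset.Icc A B).card : ℝ) = (B:ℝ) + 1 - A := by
        rw [h2, Nat.cast_sub hAB]; push_cast; ring
      have h4 : (B:ℝ) ≤ (m:ℝ)*p + T := Nat.floor_le (by positivity)
      have h5 : (m:ℝ)*p - T ≤ (A:ℝ) := Nat.le_ceil _
      linarith
    · have : Finset.Icc A B = ∅ := by
        apply Finset.Icc_eq_empty
        omega
      rw [this] at h1
      simp at h1
      rw [h1]
      simp
      positivity
  -- combine
  have hmax : ∑ i ∈ W, bw p m i ≤ (W.card : ℝ) * bw p m n := by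
    calc ∑ i ∈ W, bw p m i ≤ ∑ _i ∈ W, bw p m n := by
          apply Finset.sum_le_sum
          intro i hi
          simp only [hW, mem_filter, mem_range] at hi
          exact bw_mode hp0 hp1 hnm hn1 hn2 i (Nat.lt_succ_iff.mp hi.1)
      _ = (W.card : ℝ) * bw p m n := by rw [Finset.sum_const, nsmul_eq_mul]
  have hbwn := bw_pos hp0 hp1 hnm
  have : 3/4 ≤ (2*T+1) * bw p m n := by nlinarith
  calc (3:ℝ)/4 ≤ (2*T+1) * bw p m n := this
    _ = (4 * Real.sqrt V + 1) * bw p m n := by rw [hT]; ring_nf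

theorem binMean_tendsto_imp_sqrt_bound
    (a : ℕ → ℝ) (ha : ∀ n, 0 ≤ a n) (p : ℝ) (hp0 : 0 < p) (hp1 : p < 1) (l : ℝ)
    (h : Tendsto (binMean p a) atTop (nhds l)) :
    ∃ C : ℝ, 0 < C ∧ ∀ᶠ n : ℕ in atTop, a n ≤ C * Real.sqrt n := by
  -- eventual bound on binMean
  have hev : ∀ᶠ m : ℕ in atTop, binMean p a m ≤ l + 1 :=
    h.eventually (eventually_le_nhds (lt_add_one l))
  obtain ⟨N₀, hN₀⟩ := eventually_atTop.mp hev
  set B : ℝ := max (l + 1) 1 with hBdef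
  have hB1 : (1:ℝ) ≤ B := le_max_right _ _
  have hBpos : (0:ℝ) < B := lt_of_lt_of_le one_pos hB1
  have hsp : 0 < Real.sqrt p := Real.sqrt_pos.mpr hp0
  refine ⟨B * (20/3) / Real.sqrt p, by positivity, ?_⟩
  rw [eventually_atTop]
  refine ⟨max (N₀ + 2) 2, fun n hn => ?_⟩
  have hn2 : 2 ≤ n := le_trans (le_max_right _ _) hn
  have hnN : N₀ + 2 ≤ n := le_trans (le_max_left _ _) hn
  -- choose m
  set m : ℕ := ⌈(n:ℝ)/p⌉₊ - 1 with hmdef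
  have hnp0 : (0:ℝ) ≤ (n:ℝ)/p := by positivity
  have hceil1 : 1 ≤ ⌈(n:ℝ)/p⌉₊ := by
    apply Nat.one_le_ceil_iff.mpr
    have : (0:ℝ) < (n:ℝ) := by exact_mod_cast (by omega : 0 < n)
    positivity
  have hm1 : (m:ℝ) + 1 = (⌈(n:ℝ)/p⌉₊ : ℝ) := by
    rw [hmdef]
    rw [Nat.cast_sub hceil1]
    push_cast
    ring
  have hge : (n:ℝ)/p ≤ (m:ℝ) + 1 := by rw [hm1]; exact Nat.le_ceil _
  have hlt : (m:ℝ) + 1 < (n:ℝ)/p + 1 := by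
    rw [hm1]
    exact Nat.ceil_lt_add_one hnp0
  have hn1' : (n:ℝ) ≤ p * (m + 1) := by
    have := (div_le_iff₀ hp0).mp hge
    linarith
  have hmn' : (m:ℝ) ≤ (n:ℝ)/p := by linarith
  have hpm : p * (m:ℝ) ≤ (n:ℝ) := by
    have := (le_div_iff₀ hp0).mp hmn'
    linarith
  have hn2' : p * ((m:ℝ) + 1) ≤ (n:ℝ) + 1 := by nlinarith
  have hnm : n ≤ m := by
    have h1 : (n:ℝ) < (m:ℝ) + 1 := by nlinarith
    exact_mod_cast Nat.lt_succ_iff.mp (by exact_mod_cast h1)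
  have hmn : (m:ℝ) ≤ (n:ℝ)/p := by linarith
  have hmge : 1 ≤ m := by omega
  have hmN₀ : N₀ ≤ m := by omega
  -- key bound on a n
  have hterm : bw p m n * a n ≤ binMean p a m := by
    have : binMean p a m = ∑ i ∈ Finset.range (m+1), bw p m i * a i := by
      unfold binMean bw
      exact Finset.sum_congr rfl fun i _ => rfl
    rw [this]
    apply Finset.single_le_sum (f := fun i => bw p m i * a i)
    · intro i hi
      exact mul_nonneg (bw_pos hp0 hp1 (Nat.lt_succ_iff.mp (mem_range.mp hi))).le (ha i)
    · exact mem_range.mpr (by omega)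
  have hbinB : binMean p a m ≤ B := le_trans (hN₀ m hmN₀) (le_max_left _ _)
  have hlb := bw_mode_lb hp0 hp1 hmge hnm hn1' hn2'
  set σ : ℝ := Real.sqrt ((m:ℝ) * p * (1-p)) with hσ
  have hσnn : 0 ≤ σ := Real.sqrt_nonneg _
  have hbwn := bw_pos hp0 hp1 hnm
  -- a n ≤ (4/3) * (4σ+1) * B
  have step1 : a n * (3/4) ≤ (4*σ + 1) * B := by
    have h1 : a n * (3/4) ≤ a n * ((4*σ+1) * bw p m n) :=
      mul_le_mul_of_nonneg_left hlb (ha n)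
    have h2 : a n * ((4*σ+1) * bw p m n) = (4*σ+1) * (bw p m n * a n) := by ring
    have h3 : (4*σ+1) * (bw p m n * a n) ≤ (4*σ+1) * B := by
      apply mul_le_mul_of_nonneg_left (le_trans hterm hbinB)
      positivity
    linarith
  -- σ ≤ √m ≤ √n / √p
  have hσm : σ ≤ Real.sqrt m := by
    apply Real.sqrt_le_sqrt
    nlinarith [mul_nonneg (Nat.cast_nonneg (α := ℝ) m) (sq_nonneg (p - 1/2))]
  have hsqm1 : 1 ≤ Real.sqrt m := by
    rw [show (1:ℝ) = Real.sqrt 1 by simp]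
    apply Real.sqrt_le_sqrt
    exact_mod_cast hmge
  have hsqmn : Real.sqrt m ≤ Real.sqrt n / Real.sqrt p := by
    have h1 : Real.sqrt m ≤ Real.sqrt ((n:ℝ)/p) := Real.sqrt_le_sqrt hmn
    rwa [Real.sqrt_div (Nat.cast_nonneg n)] at h1
  have h5 : 4*σ + 1 ≤ 5 * Real.sqrt m := by linarith
  have h6 : (4*σ+1) * B ≤ 5 * Real.sqrt m * B := mul_le_mul_of_nonneg_right h5 hBpos.le
  have h7 : 5 * Real.sqrt m * B ≤ 5 * (Real.sqrt n / Real.sqrt p) * B := by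
    apply mul_le_mul_of_nonneg_right _ hBpos.le
    linarith
  have heq : B * (20/3) / Real.sqrt p * Real.sqrt n
      = (4/3) * (5 * (Real.sqrt n / Real.sqrt p) * B) := by
    field_simp
    ring
  rw [heq]
  linarith
end

section
/- For every p ∈ (0,1), the sequence n ↦ √(2π p (1−p) n) · C(n,⌊np⌋) p^{⌊np⌋} (1−p)^{n−⌊np⌋} converges to 1 as n → ∞. -/
open Filter Finset Real

/-- The binomial probability mass function `B_n^i(p)`. -/
noncomputable def binPMF (p : ℝ) (n i : ℕ) : ℝ :=
  (n.choose i : ℝ) * p ^ i * (1 - p) ^ (n - i)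

/-!
With `q = 1 - p` and `m = n - k`, Stirling's formula `n! = s_n √(2n) (n/e)^n`, `s_n → √π`, turns
`√(2π p q n) B_n^k(p)` into
`s_n / (s_k s_m) · √(π (np/k) (nq/m)) · (np/k)^k (nq/m)^m`.
The first factor tends to `1/√π` and the second to `√π` as soon as `k - np` stays bounded.
For the last one, `1 - 1/x ≤ log x ≤ x - 1` squeezes `k log (np/k) + m log (nq/m)` between
`-(k - np)² (1/(np) + 1/(nq))` and `0`, so it tends to `1` as well.
-/

open scoped Nat Topology
open Stirling

lemma mul_log_div_add_mul_log_div_le_zero {a b A B : ℝ} (ha : 0 < a) (hb : 0 < b)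
    (hA : 0 < A) (hB : 0 < B) (hsum : a + b = A + B) :
    a * log (A / a) + b * log (B / b) ≤ 0 := by
  have h₁ : a * log (A / a) ≤ A - a := by
    have := mul_le_mul_of_nonneg_left (log_le_sub_one_of_pos (div_pos hA ha)) ha.le
    rwa [mul_sub_one, mul_div_cancel₀ _ ha.ne'] at this
  have h₂ : b * log (B / b) ≤ B - b := by
    have := mul_le_mul_of_nonneg_left (log_le_sub_one_of_pos (div_pos hB hb)) hb.le
    rwa [mul_sub_one, mul_div_cancel₀ _ hb.ne'] at this
  linarith

lemma neg_sq_mul_le_mul_log_div_add_mul_log_div {a b A B : ℝ} (ha : 0 < a) (hb : 0 < b)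
    (hA : 0 < A) (hB : 0 < B) (hsum : a + b = A + B) :
    -((A - a) ^ 2 * (A⁻¹ + B⁻¹)) ≤ a * log (A / a) + b * log (B / b) := by
  have h₁ := mul_le_mul_of_nonneg_left (one_sub_inv_le_log_of_pos (div_pos hA ha)) ha.le
  have h₂ := mul_le_mul_of_nonneg_left (one_sub_inv_le_log_of_pos (div_pos hB hb)) hb.le
  have key : a * (1 - (A / a)⁻¹) + b * (1 - (B / b)⁻¹) = -((A - a) ^ 2 * (A⁻¹ + B⁻¹)) := by
    have hb' : b = A + B - a := by linarith
    subst hb'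
    field_simp
    ring
  linarith

lemma exp_neg_sq_mul_le_div_pow_mul_div_pow {a b : ℕ} {A B : ℝ} (ha : a ≠ 0) (hb : b ≠ 0)
    (hA : 0 < A) (hB : 0 < B) (hsum : (a : ℝ) + b = A + B) :
    exp (-((A - a) ^ 2 * (A⁻¹ + B⁻¹))) ≤ (A / a) ^ a * (B / b) ^ b ∧
      (A / a) ^ a * (B / b) ^ b ≤ 1 := by
  have ha' : (0 : ℝ) < a := by positivity
  have hb' : (0 : ℝ) < b := by positivity
  have hexp : (A / a) ^ a * (B / b) ^ b = exp (a * log (A / a) + b * log (B / b)) := by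
    rw [exp_add, exp_nat_mul, exp_nat_mul, exp_log (by positivity), exp_log (by positivity)]
  rw [hexp, ← exp_zero, exp_le_exp, exp_le_exp]
  exact ⟨neg_sq_mul_le_mul_log_div_add_mul_log_div ha' hb' hA hB hsum,
    mul_log_div_add_mul_log_div_le_zero ha' hb' hA hB hsum⟩

section
variable {α : Type*} {l : Filter α} {f g : α → ℝ} {C : ℝ}

lemma tendsto_atTop_of_abs_sub_le (hg : Tendsto g l atTop) (h : ∀ᶠ x in l, |f x - g x| ≤ C) :
    Tendsto f l atTop := by
  refine tendsto_atTop_mono' l ?_ (tendsto_atTop_add_const_right l (-C) hg)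
  filter_upwards [h] with x hx
  linarith [(abs_le.mp hx).1]

lemma tendsto_div_of_abs_sub_le (hg : Tendsto g l atTop) (h : ∀ᶠ x in l, |f x - g x| ≤ C) :
    Tendsto (fun x => g x / f x) l (𝓝 1) := by
  have hrel : Tendsto (fun x => (f x - g x) / g x) l (𝓝 0) := by
    refine squeeze_zero_norm' ?_ (by simpa using hg.inv_tendsto_atTop.const_mul C)
    filter_upwards [h, hg.eventually_gt_atTop 0] with x hx hgx
    rw [norm_div, Real.norm_eq_abs, Real.norm_eq_abs, abs_of_pos hgx, div_eq_mul_inv]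
    exact mul_le_mul_of_nonneg_right hx (inv_nonneg.mpr hgx.le)
  have hfg : Tendsto (fun x => f x / g x) l (𝓝 1) := by
    rw [← add_zero 1]
    refine (hrel.const_add 1).congr' ?_
    filter_upwards [hg.eventually_gt_atTop 0] with x hgx
    field_simp
    ring
  simpa using hfg.inv₀ one_ne_zero

lemma tendsto_div_pow_mul_div_pow_of_abs_sub_le {a b : α → ℕ} {A B : α → ℝ}
    (hA : Tendsto A l atTop) (hB : Tendsto B l atTop)
    (ha : ∀ᶠ x in l, a x ≠ 0) (hb : ∀ᶠ x in l, b x ≠ 0)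
    (hsum : ∀ᶠ x in l, (a x : ℝ) + b x = A x + B x) (hdev : ∀ᶠ x in l, |(a x : ℝ) - A x| ≤ C) :
    Tendsto (fun x => (A x / a x) ^ a x * (B x / b x) ^ b x) l (𝓝 1) := by
  have hlower : Tendsto (fun x => exp (-(C ^ 2 * ((A x)⁻¹ + (B x)⁻¹)))) l (𝓝 1) := by
    simpa using ((hA.inv_tendsto_atTop.add hB.inv_tendsto_atTop).const_mul (C ^ 2)).neg.rexp
  refine tendsto_of_tendsto_of_tendsto_of_le_of_le' hlower tendsto_const_nhds ?_ ?_
  all_goals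
    filter_upwards [ha, hb, hsum, hdev, hA.eventually_gt_atTop 0, hB.eventually_gt_atTop 0]
      with x hax hbx hsumx hdevx hAx hBx
    have hbounds := exp_neg_sq_mul_le_div_pow_mul_div_pow hax hbx hAx hBx hsumx
  · refine le_trans (exp_le_exp.mpr (neg_le_neg ?_)) hbounds.1
    refine mul_le_mul_of_nonneg_right ?_ (by positivity)
    rw [← sq_abs, abs_sub_comm]
    exact pow_le_pow_left₀ (abs_nonneg _) hdevx 2
  · exact hbounds.2

end

lemma factorial_eq_stirlingSeq_mul {n : ℕ} (hn : n ≠ 0) :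
    (n ! : ℝ) = stirlingSeq n * (√(2 * n) * (n / exp 1) ^ n) := by
  rw [stirlingSeq, div_mul_cancel₀]
  positivity

lemma sqrt_mul_binPMF_eq {p : ℝ} (hp0 : 0 ≤ p) (hp1 : p ≤ 1) {n k : ℕ} (hk : k ≠ 0)
    (hkn : k < n) :
    √(2 * π * p * (1 - p) * n) * binPMF p n k =
      stirlingSeq n / (stirlingSeq k * stirlingSeq (n - k)) *
        √(π * (n * p / k) * (n * (1 - p) / (n - k : ℕ))) *
        ((n * p / k) ^ k * (n * (1 - p) / (n - k : ℕ)) ^ (n - k)) := by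
  obtain ⟨m, rfl⟩ := Nat.exists_eq_add_of_le hkn.le
  have hm : m ≠ 0 := by omega
  have hq : 0 ≤ 1 - p := by linarith
  have hsqrt :
      √(2 * π * p * (1 - p) * (k + m : ℕ)) * √(2 * (k + m : ℕ)) / (√(2 * k) * √(2 * m)) =
      √(π * ((k + m : ℕ) * p / k) * ((k + m : ℕ) * (1 - p) / m)) := by
    rw [← sqrt_mul (by positivity), ← sqrt_mul (by positivity), ← sqrt_div (by positivity)]
    congr 1
    field_simp
  have hpow : ((k + m : ℕ) / exp 1) ^ (k + m) / ((k / exp 1) ^ k * (m / exp 1) ^ m) *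
      (p ^ k * (1 - p) ^ m) = ((k + m : ℕ) * p / k) ^ k * ((k + m : ℕ) * (1 - p) / m) ^ m := by
    rw [pow_add]
    field_simp
    simp only [div_pow, mul_pow]
    field_simp
  rw [Nat.add_sub_cancel_left, ← hsqrt, ← hpow, binPMF, Nat.add_sub_cancel_left,
    Nat.cast_add_choose, factorial_eq_stirlingSeq_mul (by omega : k + m ≠ 0),
    factorial_eq_stirlingSeq_mul hk, factorial_eq_stirlingSeq_mul hm]
  field_simp

theorem tendsto_sqrt_mul_binPMF_of_abs_sub_le {p C : ℝ} (hp0 : 0 < p) (hp1 : p < 1)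
    {k : ℕ → ℕ} (hk : ∀ᶠ n in atTop, |(k n : ℝ) - n * p| ≤ C) :
    Tendsto (fun n : ℕ => √(2 * π * p * (1 - p) * n) * binPMF p n (k n)) atTop (𝓝 1) := by
  have hq : 0 < 1 - p := by linarith
  have hA : Tendsto (fun n : ℕ => (n : ℝ) * p) atTop atTop :=
    tendsto_natCast_atTop_atTop.atTop_mul_const hp0
  have hB : Tendsto (fun n : ℕ => (n : ℝ) * (1 - p)) atTop atTop :=
    tendsto_natCast_atTop_atTop.atTop_mul_const hq
  have hkn : ∀ᶠ n in atTop, k n < n := by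
    filter_upwards [hk, hB.eventually_gt_atTop C] with n hdev hCn
    exact_mod_cast (by linarith [(abs_le.mp hdev).2] : (k n : ℝ) < n)
  have hm : ∀ᶠ n in atTop, |((n - k n : ℕ) : ℝ) - n * (1 - p)| ≤ C := by
    filter_upwards [hk, hkn] with n hdev hlt
    rw [Nat.cast_sub hlt.le, ← abs_neg]
    convert hdev using 2
    ring
  have hk_top := tendsto_natCast_atTop_iff.mp (tendsto_atTop_of_abs_sub_le hA hk)
  have hm_top := tendsto_natCast_atTop_iff.mp (tendsto_atTop_of_abs_sub_le hB hm)
  have hk0 : ∀ᶠ n in atTop, k n ≠ 0 := hk_top.eventually_ne_atTop 0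
  have hm0 : ∀ᶠ n in atTop, n - k n ≠ 0 := hm_top.eventually_ne_atTop 0
  have hsum : ∀ᶠ n in atTop, (k n : ℝ) + (n - k n : ℕ) = n * p + n * (1 - p) := by
    filter_upwards [hkn] with n hlt
    rw [Nat.cast_sub hlt.le]
    ring
  have hstirling := tendsto_stirlingSeq_sqrt_pi.div
    ((tendsto_stirlingSeq_sqrt_pi.comp hk_top).mul (tendsto_stirlingSeq_sqrt_pi.comp hm_top))
    (by positivity)
  have hsqrt := (((tendsto_div_of_abs_sub_le hA hk).const_mul π).mul
    (tendsto_div_of_abs_sub_le hB hm)).sqrt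
  have hlim := (hstirling.mul hsqrt).mul
    (tendsto_div_pow_mul_div_pow_of_abs_sub_le hA hB hk0 hm0 hsum hk)
  rw [show √π / (√π * √π) * √(π * 1 * 1) * 1 = 1 by field_simp] at hlim
  refine hlim.congr' ?_
  filter_upwards [hk0, hkn] with n hk0 hlt
  exact (sqrt_mul_binPMF_eq hp0.le hp1.le hk0 hlt).symm

theorem sqrt_mul_binPMF_floor_tendsto_one (p : ℝ) (hp0 : 0 < p) (hp1 : p < 1) :
    Tendsto (fun n : ℕ =>
        Real.sqrt (2 * Real.pi * p * (1 - p) * n) * binPMF p n ⌊(n : ℝ) * p⌋₊)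
      atTop (nhds 1) := by
  refine tendsto_sqrt_mul_binPMF_of_abs_sub_le (C := 1) hp0 hp1 (Eventually.of_forall fun n => ?_)
  have hfloor_le := Nat.floor_le (by positivity : 0 ≤ (n : ℝ) * p)
  have hlt_floor := Nat.lt_floor_add_one ((n : ℝ) * p)
  exact abs_le.mpr ⟨by linarith, by linarith⟩
end

section
/- Let p ∈ (0,1) and let β : ℕ → ℝ be a function such that |β(n)| = O(√n) and |β(n)| → ∞ as n → ∞. Then for all sufficiently large n, the integer ⌊np⌋ − ⌊β(n)⌋ lies in [0, n] and B_n^{⌊np⌋}(p) ≤ exp( ⌊β(n)⌋² / (p(1−p)n) ) · B_n^{⌊np⌋ − ⌊β(n)⌋}(p). -/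
open Filter Finset Real Asymptotics

/-! Write `M = ⌊np⌋` and `k = ⌊β n⌋`. For `k > 0`, `B(M) / B(M - k)` is a product of `k`
consecutive ratios `rᵢ = B(i + 1) / B(i) = (n - i) p / ((i + 1)(1 - p))`, and
`∏ rᵢ ≤ exp ∑ (rᵢ - 1)`. Since `M ≤ np < M + 1`, the excess `rᵢ - 1` at `i = M - j` is at most
about `j / ((M - k)(1 - p))`, so the exponent is about `k² / (2 (M - k)(1 - p)) ≤ k² / (p(1 - p)n)`,
provided `k` is not tiny and is a small fraction of `np`. Both hold eventually because
`|β n| → ∞` and `β n = O(√n) = o(n)`. The case `k < 0` is the case `k > 0` for `1 - p`, via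
`B_n^i(p) = B_n^{n-i}(1 - p)`. -/

theorem prod_le_exp_sum_sub_one {ι : Type*} (s : Finset ι) {f : ι → ℝ}
    (hf : ∀ i ∈ s, 0 ≤ f i) : ∏ i ∈ s, f i ≤ exp (∑ i ∈ s, (f i - 1)) := by
  rw [exp_sum]
  exact prod_le_prod hf fun i _ => by linarith [add_one_le_exp (f i - 1)]

theorem sum_range_add_one_sub (K : ℕ) : ∑ j ∈ range K, ((K : ℝ) + 1 - j) = K * (K + 3) / 2 := by
  induction K with
  | zero => simp
  | succ K ih =>
    rw [sum_range_succ']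
    push_cast at ih ⊢
    simp only [add_sub_add_right_eq_sub, ih]
    ring

theorem isLittleO_sqrt_natCast : (fun n : ℕ => √(n : ℝ)) =o[atTop] (fun n : ℕ => (n : ℝ)) := by
  have h := ((isLittleO_pow_pow_atTop_of_lt (𝕜 := ℝ) one_lt_two).sqrt
    (Eventually.of_forall fun x => by positivity)).comp_tendsto tendsto_natCast_atTop_atTop
  simpa [Function.comp_def] using h

section Floor

variable {R : Type*} [CommRing R] [LinearOrder R] [IsStrictOrderedRing R] [FloorRing R]

theorem le_abs_floor_of_le_abs {x : R} {m : ℤ} (h : (m : R) ≤ |x|) : m ≤ |⌊x⌋| := by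
  rcases le_or_gt 0 x with hx | hx
  · rw [abs_of_nonneg hx] at h
    exact (Int.le_floor.2 h).trans (le_abs_self _)
  · rw [abs_of_neg hx] at h
    have : (⌊x⌋ : R) ≤ (-m : ℤ) := (Int.floor_le x).trans (by push_cast; linarith)
    have : ⌊x⌋ ≤ -m := by exact_mod_cast this
    linarith [neg_abs_le ⌊x⌋]

theorem abs_floor_le_abs_add_one (x : R) : |(⌊x⌋ : R)| ≤ |x| + 1 := by
  have := Int.floor_le x
  have := Int.sub_one_lt_floor x
  rw [abs_le]
  constructor <;> linarith [le_abs_self x, neg_abs_le x]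

end Floor

theorem binPMF_nonneg {p : ℝ} (hp0 : 0 ≤ p) (hp1 : p ≤ 1) (n i : ℕ) : 0 ≤ binPMF p n i := by
  have : 0 ≤ 1 - p := sub_nonneg.2 hp1
  unfold binPMF
  positivity

theorem binPMF_one_sub {p : ℝ} {n i : ℕ} (hi : i ≤ n) :
    binPMF (1 - p) n (n - i) = binPMF p n i := by
  rw [binPMF, binPMF, Nat.choose_symm hi, Nat.sub_sub_self hi, sub_sub_cancel]
  ring

theorem binPMF_succ {p : ℝ} (hp1 : p ≠ 1) {n i : ℕ} (hi : i < n) :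
    binPMF p n (i + 1) = (n - i) * p / ((i + 1) * (1 - p)) * binPMF p n i := by
  have hq : 1 - p ≠ 0 := sub_ne_zero.2 hp1.symm
  have hchoose : (n.choose (i + 1) : ℝ) * (i + 1) = n.choose i * (n - i) := by
    rw [← Nat.cast_sub hi.le]
    exact_mod_cast Nat.choose_succ_right_eq n i
  rw [binPMF, binPMF, show n - i = n - (i + 1) + 1 by omega, pow_succ]
  field_simp
  linear_combination p ^ (i + 1) * (1 - p) ^ (n - (i + 1)) * (1 - p) * hchoose

theorem binPMF_add_eq_prod_mul {p : ℝ} (hp1 : p ≠ 1) {n a k : ℕ} (h : a + k ≤ n) :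
    binPMF p n (a + k) =
      (∏ j ∈ range k, (n - (a + j : ℝ)) * p / ((a + j + 1) * (1 - p))) * binPMF p n a := by
  induction k with
  | zero => simp
  | succ k ih =>
    rw [← add_assoc, binPMF_succ hp1 (by omega), ih (by omega), prod_range_succ]
    push_cast
    ring

/-- The constants `7` and `3` are what make the exponent `K (K + 3) / (2 (a + 1)(1 - p))`
obtained from the ratios at most `K² / (p (1 - p) n)`. -/
theorem binPMF_add_le_exp_mul {p : ℝ} (hp0 : 0 < p) (hp1 : p < 1) {n a K : ℕ} (hK : 7 ≤ K)
    (ha : 3 * K ≤ a) (hn : a + K ≤ n) (hnp : n * p < a + K + 1) :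
    binPMF p n (a + K) ≤ exp (K ^ 2 / (p * (1 - p) * n)) * binPMF p n a := by
  have hq : 0 < 1 - p := sub_pos.2 hp1
  have hKr : (7 : ℝ) ≤ K := by exact_mod_cast hK
  have har : 3 * (K : ℝ) ≤ a := by exact_mod_cast ha
  have hnr : (a : ℝ) + K ≤ n := by exact_mod_cast hn
  rw [binPMF_add_eq_prod_mul hp1.ne hn]
  gcongr ?_ * _
  · exact binPMF_nonneg hp0.le hp1.le n a
  refine (prod_le_exp_sum_sub_one _ fun j hj => ?_).trans (exp_le_exp.2 ?_)
  · have : (j : ℝ) < K := by exact_mod_cast mem_range.1 hj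
    have : 0 ≤ (n : ℝ) - (a + j) := by linarith
    positivity
  have hexcess : ∀ j ∈ range K, (n - (a + j : ℝ)) * p / ((a + j + 1) * (1 - p)) - 1 ≤
      ((K : ℝ) + 1 - j) / ((a + 1) * (1 - p)) := by
    intro j hj
    have hjK : (j : ℝ) < K := by exact_mod_cast mem_range.1 hj
    rw [div_sub_one (by positivity), show (n - (a + j : ℝ)) * p - (a + j + 1) * (1 - p)
      = n * p - a - j - (1 - p) by ring]
    exact div_le_div₀ (by linarith) (by linarith) (by positivity) (by gcongr ?_ * _; linarith)
  have hcentral : ((K : ℝ) + 3) * (n * p) ≤ 2 * K * (a + 1) := by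
    nlinarith [mul_nonneg (by linarith : (0 : ℝ) ≤ K - 3) (by linarith : (0 : ℝ) ≤ a - 3 * K),
      mul_nonneg (by linarith : (0 : ℝ) ≤ K - 7) (by linarith : (0 : ℝ) ≤ 2 * K + 3)]
  calc _ ≤ ∑ j ∈ range K, ((K : ℝ) + 1 - j) / ((a + 1) * (1 - p)) := sum_le_sum hexcess
    _ = K * (K + 3) / 2 / ((a + 1) * (1 - p)) := by rw [← sum_div, sum_range_add_one_sub]
    _ ≤ K ^ 2 / (p * (1 - p) * n) := by
      have : (0 : ℝ) < n := by linarith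
      rw [div_le_div_iff₀ (by positivity) (by positivity)]
      nlinarith [mul_le_mul_of_nonneg_left hcentral (by positivity : (0 : ℝ) ≤ K * (1 - p))]

theorem binPMF_le_exp_mul_add {p : ℝ} (hp0 : 0 < p) (hp1 : p < 1) {n M L : ℕ} (hL : 7 ≤ L)
    (hn : M + 4 * L ≤ n) (hnp : M ≤ n * p) :
    binPMF p n M ≤ exp (L ^ 2 / (p * (1 - p) * n)) * binPMF p n (M + L) := by
  have hcast : ((n - (M + L) : ℕ) : ℝ) = n - (M + L) := by
    rw [Nat.cast_sub (by omega)]; push_cast; ring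
  have hsymm := binPMF_add_le_exp_mul (p := 1 - p) (n := n) (a := n - (M + L)) (K := L)
    (by linarith) (by linarith) hL (by omega) (by omega) (by rw [hcast]; linarith)
  rw [show n - (M + L) + L = n - M by omega, binPMF_one_sub (by omega),
    binPMF_one_sub (by omega), sub_sub_cancel] at hsymm
  convert hsymm using 4
  ring

theorem binPMF_floor_le_shifted {p : ℝ} (hp0 : 0 < p) (hp1 : p < 1) {n : ℕ} {k : ℤ}
    (hk : 7 ≤ |k|) (hkp : 4 * |(k : ℝ)| ≤ n * p) (hkq : 4 * |(k : ℝ)| ≤ n * (1 - p)) :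
    0 ≤ ⌊(n : ℝ) * p⌋ - k ∧ ⌊(n : ℝ) * p⌋ - k ≤ (n : ℤ) ∧
      binPMF p n (⌊(n : ℝ) * p⌋).toNat ≤
        exp ((k : ℝ) ^ 2 / (p * (1 - p) * n)) * binPMF p n (⌊(n : ℝ) * p⌋ - k).toNat := by
  obtain ⟨M, hM⟩ : ∃ M : ℕ, ⌊(n : ℝ) * p⌋ = M :=
    ⟨_, (Int.natCast_floor_eq_floor (by positivity)).symm⟩
  have hMle : (M : ℝ) ≤ n * p := by exact_mod_cast hM ▸ Int.floor_le ((n : ℝ) * p)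
  have hMlt : n * p < M + 1 := by exact_mod_cast hM ▸ Int.lt_floor_add_one ((n : ℝ) * p)
  have hMn : M ≤ n := by exact_mod_cast (show (M : ℝ) ≤ n by nlinarith)
  rw [hM, Int.toNat_natCast]
  obtain ⟨K, rfl | rfl⟩ := Int.eq_nat_or_neg k
  · simp only [Int.cast_natCast, Nat.abs_cast] at hk hkp hkq ⊢
    have h4K : 4 * K < M + 1 := by exact_mod_cast (show (4 * K : ℝ) < M + 1 by linarith)
    obtain ⟨a, rfl⟩ : ∃ a, M = a + K := ⟨M - K, by omega⟩
    refine ⟨by omega, by omega, ?_⟩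
    rw [show ((a + K : ℕ) : ℤ) - K = (a : ℕ) by push_cast; ring, Int.toNat_natCast]
    push_cast at hMlt
    exact binPMF_add_le_exp_mul hp0 hp1 (by omega) (by omega) hMn hMlt
  · simp only [Int.cast_neg, Int.cast_natCast, abs_neg, Nat.abs_cast, neg_sq,
      sub_neg_eq_add] at hk hkp hkq ⊢
    have hML : M + 4 * K ≤ n := by exact_mod_cast (show (M + 4 * K : ℝ) ≤ n by linarith)
    refine ⟨by omega, by omega, ?_⟩
    rw [show (M : ℤ) + K = (M + K : ℕ) by push_cast; ring, Int.toNat_natCast]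
    exact binPMF_le_exp_mul_add hp0 hp1 (by omega) hML hMle

theorem binPMF_center_le_shifted (p : ℝ) (hp0 : 0 < p) (hp1 : p < 1)
    (β : ℕ → ℝ)
    (hβO : (fun n : ℕ => |β n|) =O[atTop] (fun n : ℕ => Real.sqrt n))
    (hbeta_top : Tendsto (fun n => |β n|) atTop atTop) :
    ∀ᶠ n : ℕ in atTop,
      0 ≤ ⌊(n : ℝ) * p⌋ - ⌊β n⌋ ∧ ⌊(n : ℝ) * p⌋ - ⌊β n⌋ ≤ (n : ℤ) ∧
      binPMF p n (⌊(n : ℝ) * p⌋).toNat ≤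
        Real.exp ((⌊β n⌋ : ℝ) ^ 2 / (p * (1 - p) * n)) *
          binPMF p n (⌊(n : ℝ) * p⌋ - ⌊β n⌋).toNat := by
  have hc : 0 < min p (1 - p) / 8 := by have := sub_pos.2 hp1; positivity
  filter_upwards [hbeta_top.eventually_ge_atTop 7,
    (hβO.trans_isLittleO isLittleO_sqrt_natCast).bound hc] with n hβ7 hβn
  rw [norm_of_nonneg (abs_nonneg _), Real.norm_natCast] at hβn
  have hfloor : 4 * |(⌊β n⌋ : ℝ)| ≤ n * min p (1 - p) := by
    linarith [abs_floor_le_abs_add_one (β n)]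
  refine binPMF_floor_le_shifted hp0 hp1 (le_abs_floor_of_le_abs (by exact_mod_cast hβ7)) ?_ ?_
  · nlinarith [min_le_left p (1 - p)]
  · nlinarith [min_le_right p (1 - p)]
end

section
/- For every p ∈ (0,1), every n ∈ ℕ and every 0 ≤ i ≤ n, it holds that w_n^i(p) = (1/p)·(1 − ∑_{j=0}^{i} C(n+1,j) p^j (1−p)^{n+1−j}). -/
/-!
`p * w_n^i(p)` is the upper tail `P(Bin(n+1, p) > i)`: the `j`-th summand times `p` is the
probability that the `(i+1)`-st success occurs at trial `j + 1`. Formally, adding a trial lowers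
the binomial CDF at `i` by `p * P(Bin(n, p) = i)` (Pascal's rule, by induction on `i`), which is
exactly the increment of `p * w_n^i(p)` in `n`.
-/

open Finset

/-- The weight `w_n^i(p) = ∑_{j=i}^n C(j,i) p^i (1-p)^{j-i}`. -/
noncomputable def weightW (p : ℝ) (n i : ℕ) : ℝ :=
  ∑ j ∈ Finset.Icc i n, (j.choose i : ℝ) * p ^ i * (1 - p) ^ (j - i)

section

variable {R : Type*} [CommRing R]

def binomCDF (p : R) (n i : ℕ) : R :=
  ∑ j ∈ range (i + 1), (n.choose j : R) * p ^ j * (1 - p) ^ (n - j)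

theorem binomCDF_zero_left (p : R) (i : ℕ) : binomCDF p 0 i = 1 := by
  simp [binomCDF, sum_range_succ']

theorem binomCDF_succ_right (p : R) (n i : ℕ) :
    binomCDF p n (i + 1) =
      binomCDF p n i + n.choose (i + 1) * p ^ (i + 1) * (1 - p) ^ (n - (i + 1)) :=
  sum_range_succ _ _

theorem binomCDF_succ_left (p : R) (n : ℕ) :
    ∀ i, binomCDF p (n + 1) i = binomCDF p n i - n.choose i * p ^ (i + 1) * (1 - p) ^ (n - i)
  | 0 => by simp [binomCDF]; ring
  | i + 1 => by
    rw [binomCDF_succ_right, binomCDF_succ_left p n i, binomCDF_succ_right, Nat.choose_succ_succ',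
      Nat.add_sub_add_right]
    rcases lt_or_ge n (i + 1) with h | h
    · simp [Nat.choose_eq_zero_of_lt h]
    · obtain ⟨k, rfl⟩ := exists_add_of_le h
      simp only [Nat.add_sub_cancel_left, show i + 1 + k - i = k + 1 by omega]
      push_cast
      ring

theorem sum_range_choose_mul_pow (p : R) (i : ℕ) :
    ∀ m, ∑ j ∈ range m, (j.choose i : R) * p ^ (i + 1) * (1 - p) ^ (j - i) =
      1 - binomCDF p m i
  | 0 => by simp [binomCDF_zero_left]
  | m + 1 => by
    rw [sum_range_succ, sum_range_choose_mul_pow p i m, binomCDF_succ_left]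
    ring

end

theorem weightW_eq_sum_range (p : ℝ) (n i : ℕ) :
    weightW p n i = ∑ j ∈ range (n + 1), (j.choose i : ℝ) * p ^ i * (1 - p) ^ (j - i) := by
  refine sum_subset (fun j hj => by simp at hj ⊢; omega) fun j hj hji => ?_
  have : j < i := by simp at hj hji; omega
  simp [Nat.choose_eq_zero_of_lt this]

theorem mul_weightW (p : ℝ) (n i : ℕ) : p * weightW p n i = 1 - binomCDF p (n + 1) i := by
  rw [weightW_eq_sum_range, mul_sum, ← sum_range_choose_mul_pow]
  exact sum_congr rfl fun j _ => by ring

theorem weightW_eq_general (p : ℝ) (hp0 : 0 < p) (n i : ℕ) :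
    weightW p n i =
      (1 / p) * (1 - ∑ j ∈ Finset.range (i + 1),
        ((n + 1).choose j : ℝ) * p ^ j * (1 - p) ^ (n + 1 - j)) := by
  rw [← binomCDF, ← mul_weightW, ← mul_assoc, one_div_mul_cancel hp0.ne', one_mul]

theorem weightW_eq (p : ℝ) (hp0 : 0 < p) (hp1 : p < 1) (n i : ℕ) (hin : i ≤ n) :
    weightW p n i =
      (1 / p) * (1 - ∑ j ∈ Finset.range (i + 1),
        ((n + 1).choose j : ℝ) * p ^ j * (1 - p) ^ (n + 1 - j)) :=
  weightW_eq_general p hp0 n i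
end

section
/- Let (a_n)_{n≥0} be the sequence a_n = (−1)^n · n. Then for every p ∈ (0,1) the sequence of p-binomial means (a^p_n)_{n≥0} converges to 0, but the sequence of arithmetic means (a*_n)_{n≥0} does not converge. -/
open Filter Finset

/-! The `p`-binomial mean of `i ↦ (-1)^i i` is `n (-p) (1 - 2p)^(n-1)` (the mean of a binomial
law with "probability" `-p`), which tends to `0` because `|1 - 2p| < 1`. The partial sums of
`(-1)^i i` alternate between `k` and `-(k + 1)`, so the Cesàro means along even and odd indices
tend to `1/2` and `-1/2`. -/

theorem sum_range_choose_mul_pow_mul_pow_mul_cast {R : Type*} [CommSemiring R] (x y : R) (n : ℕ) :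
    ∑ i ∈ range (n + 2), ((n + 1).choose i : R) * x ^ i * y ^ (n + 1 - i) * i
      = (n + 1) * x * (x + y) ^ n := by
  have hterm (j : ℕ) : ((n + 1).choose (j + 1) : R) * x ^ (j + 1) * y ^ (n + 1 - (j + 1))
      * ((j + 1 : ℕ) : R) = (n + 1) * x * (x ^ j * y ^ (n - j) * n.choose j) := by
    have hchoose : ((n + 1).choose (j + 1) * (j + 1) : ℕ) = ((n + 1) * n.choose j : ℕ) :=
      (Nat.add_one_mul_choose_eq n j).symm
    rw [Nat.add_sub_add_right]
    calc _ = ((((n + 1).choose (j + 1) * (j + 1) : ℕ)) : R) * x * (x ^ j * y ^ (n - j)) := by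
          push_cast; ring
      _ = _ := by rw [hchoose]; push_cast; ring
  rw [sum_range_succ', Nat.cast_zero, mul_zero, add_zero]
  simp only [hterm, ← mul_sum, ← add_pow]

theorem binMean_neg_one_pow_mul_succ (p : ℝ) (n : ℕ) :
    binMean p (fun i ↦ (-1) ^ i * i) (n + 1) = (n + 1) * (-p) * (1 - 2 * p) ^ n := by
  have hsum := sum_range_choose_mul_pow_mul_pow_mul_cast (-p) (1 - p) n
  rw [show -p + (1 - p) = 1 - 2 * p by ring] at hsum
  rw [binMean, ← hsum]
  refine sum_congr rfl fun i _ ↦ ?_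
  rw [neg_pow]
  ring

theorem tendsto_binMean_neg_one_pow_mul {p : ℝ} (hp : 0 < p) (hp1 : p < 1) :
    Tendsto (binMean p (fun i ↦ (-1) ^ i * i)) atTop (nhds 0) := by
  have hr : |1 - 2 * p| < 1 := by rw [abs_lt]; constructor <;> linarith
  have hlim := ((tendsto_self_mul_const_pow_of_abs_lt_one hr).add
    (tendsto_pow_atTop_nhds_zero_of_abs_lt_one hr)).const_mul (-p)
  rw [add_zero, mul_zero] at hlim
  rw [← tendsto_add_atTop_iff_nat 1]
  refine hlim.congr fun n ↦ ?_
  rw [binMean_neg_one_pow_mul_succ]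
  ring

theorem sum_range_two_mul_add_one_neg_one_pow_mul (k : ℕ) :
    ∑ i ∈ range (2 * k + 1), ((-1 : ℝ) ^ i * i) = k := by
  induction k with
  | zero => simp
  | succ k ih =>
    have hsign : (-1 : ℝ) ^ (2 * k) = 1 := (even_two_mul k).neg_one_pow
    rw [show 2 * (k + 1) + 1 = 2 * k + 1 + 1 + 1 by ring, sum_range_succ, sum_range_succ, ih]
    push_cast
    simp only [pow_succ, hsign]
    ring

theorem cesaroMean_neg_one_pow_mul_two_mul (k : ℕ) :
    cesaroMean (fun i ↦ (-1) ^ i * i) (2 * k) = k / (2 * k + 1) := by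
  rw [cesaroMean, sum_range_two_mul_add_one_neg_one_pow_mul]
  push_cast
  ring

theorem cesaroMean_neg_one_pow_mul_two_mul_add_one (k : ℕ) :
    cesaroMean (fun i ↦ (-1) ^ i * i) (2 * k + 1) = -1 / 2 := by
  have hk : (2 * k + 2 : ℝ) ≠ 0 := by positivity
  rw [cesaroMean, sum_range_succ, sum_range_two_mul_add_one_neg_one_pow_mul, pow_succ,
    (even_two_mul k).neg_one_pow]
  push_cast
  field_simp
  ring

theorem not_tendsto_cesaroMean_neg_one_pow_mul (l : ℝ) :
    ¬ Tendsto (cesaroMean (fun i ↦ (-1) ^ i * i)) atTop (nhds l) := by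
  intro hl
  have heven : Tendsto (fun k : ℕ ↦ (k : ℝ) / (2 * k + 1)) atTop (nhds (1 / 2)) := by
    have h := (tendsto_natCast_div_add_atTop (1 / 2 : ℝ)).const_mul (1 / 2 : ℝ)
    rw [mul_one] at h
    refine h.congr fun k ↦ ?_
    field_simp
  have hmul : Tendsto (fun k : ℕ ↦ 2 * k) atTop atTop := tendsto_id.const_mul_atTop' two_pos
  have hl_even := (hl.comp hmul).congr fun k ↦ cesaroMean_neg_one_pow_mul_two_mul k
  have hl_odd := (hl.comp (tendsto_add_atTop_nat 1 |>.comp hmul)).congr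
    fun k ↦ cesaroMean_neg_one_pow_mul_two_mul_add_one k
  have h_even : l = 1 / 2 := tendsto_nhds_unique hl_even heven
  have h_odd : l = -1 / 2 := tendsto_nhds_unique hl_odd tendsto_const_nhds
  linarith

theorem signed_linear_seq
    (a : ℕ → ℝ) (ha : ∀ n, a n = (-1 : ℝ) ^ n * n) :
    (∀ p : ℝ, 0 < p → p < 1 → Tendsto (binMean p a) atTop (nhds 0)) ∧
    ¬ ∃ l : ℝ, Tendsto (cesaroMean a) atTop (nhds l) := by
  obtain rfl : a = fun n : ℕ ↦ (-1 : ℝ) ^ n * n := funext ha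
  exact ⟨fun p hp hp1 ↦ tendsto_binMean_neg_one_pow_mul hp hp1,
    fun ⟨l, hl⟩ ↦ not_tendsto_cesaroMean_neg_one_pow_mul l hl⟩
end

section
/- There exists a sequence (a_n)_{n≥0} with a_n ∈ {0,1} for all n such that the sequence of arithmetic means (a*_n)_{n≥0} converges to 0, yet for every p ∈ (0,1) the sequence of p-binomial means (a^p_n)_{n≥0} does not converge. -/
open Filter Finset

/-!
Take `a` to be the indicator of the blocks `[4ᵏ, 4ᵏ + k 2ᵏ)`. Up to `n ≈ 4ᴷ` they contain
`O(K² 2ᴷ)` points, so the Cesàro means tend to `0`. The `p`-binomial mean at `n` averages `a`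
against `Bin(n, p)`, which by Chebyshev gives mass at least `1 - p(1 - p) ≥ 3/4` to the bulk
`(n p - i)² < n`. If `n p` sits in the middle of block `k`, the bulk (of width `O(2ᵏ/√p)`) fits
inside the block (of length `k 2ᵏ`) for large `k`, so the mean is `≥ 3/4`; if `n p ≈ 3 · 4ᵏ`, the
bulk lies in the gap before block `k + 1` and the mean is `≤ 1/4`.
-/

open Polynomial

lemma binMean_eq_sum_bernsteinPolynomial (p : ℝ) (a : ℕ → ℝ) (n : ℕ) :
    binMean p a n = ∑ i ∈ range (n + 1), (bernsteinPolynomial ℝ n i).eval p * a i := by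
  simp [binMean, bernsteinPolynomial]

lemma sum_bernsteinPolynomial_eval (p : ℝ) (n : ℕ) :
    ∑ i ∈ range (n + 1), (bernsteinPolynomial ℝ n i).eval p = 1 := by
  simpa [eval_finsetSum] using congrArg (eval p) (bernsteinPolynomial.sum ℝ n)

lemma sum_sq_mul_bernsteinPolynomial_eval (p : ℝ) (n : ℕ) :
    ∑ i ∈ range (n + 1), (n * p - i) ^ 2 * (bernsteinPolynomial ℝ n i).eval p =
      n * p * (1 - p) := by
  simpa [eval_finsetSum, mul_assoc] using congrArg (eval p) (bernsteinPolynomial.variance ℝ n)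

lemma bernsteinPolynomial_eval_nonneg {p : ℝ} (hp₀ : 0 ≤ p) (hp₁ : p ≤ 1) (n i : ℕ) :
    0 ≤ (bernsteinPolynomial ℝ n i).eval p := by
  have : 0 ≤ 1 - p := sub_nonneg.2 hp₁
  simp only [bernsteinPolynomial, eval_mul, eval_pow, eval_sub, eval_one, eval_X, eval_natCast]
  positivity

/-- Chebyshev's inequality for the binomial distribution. -/
lemma sum_bernsteinPolynomial_eval_filter_le {p t : ℝ} (hp₀ : 0 ≤ p) (hp₁ : p ≤ 1) (ht : 0 < t)
    (n : ℕ) :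
    ∑ i ∈ range (n + 1) with t ≤ (n * p - (i : ℕ)) ^ 2, (bernsteinPolynomial ℝ n i).eval p ≤
      n * p * (1 - p) / t := by
  have hB := bernsteinPolynomial_eval_nonneg hp₀ hp₁ n
  calc ∑ i ∈ range (n + 1) with t ≤ (n * p - (i : ℕ)) ^ 2, (bernsteinPolynomial ℝ n i).eval p
      ≤ ∑ i ∈ range (n + 1) with t ≤ (n * p - (i : ℕ)) ^ 2,
          (n * p - i) ^ 2 / t * (bernsteinPolynomial ℝ n i).eval p :=
        sum_le_sum fun i hi => le_mul_of_one_le_left (hB i) ((one_le_div ht).2 (mem_filter.1 hi).2)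
    _ ≤ ∑ i ∈ range (n + 1), (n * p - i) ^ 2 / t * (bernsteinPolynomial ℝ n i).eval p :=
        sum_le_sum_of_subset_of_nonneg (filter_subset _ _) fun i _ _ => by
          have := hB i; positivity
    _ = n * p * (1 - p) / t := by
        simp_rw [div_mul_eq_mul_div, ← sum_div, sum_sq_mul_bernsteinPolynomial_eval]

lemma binMean_one_sub (p : ℝ) (a : ℕ → ℝ) (n : ℕ) :
    binMean p (fun i => 1 - a i) n = 1 - binMean p a n := by
  simp only [binMean_eq_sum_bernsteinPolynomial, mul_sub, mul_one, sum_sub_distrib,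
    sum_bernsteinPolynomial_eval]

lemma binMean_le_of_eq_zero_near {p : ℝ} {a : ℕ → ℝ} {n : ℕ} (hp₀ : 0 ≤ p) (hp₁ : p ≤ 1)
    (hn : 0 < n) (ha : ∀ i, a i ≤ 1) (hnear : ∀ i : ℕ, (n * p - i) ^ 2 < n → a i = 0) :
    binMean p a n ≤ p * (1 - p) := by
  have hn' : (0 : ℝ) < n := Nat.cast_pos.2 hn
  calc binMean p a n
      ≤ ∑ i ∈ range (n + 1),
          if (n : ℝ) ≤ (n * p - i) ^ 2 then (bernsteinPolynomial ℝ n i).eval p else 0 := by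
        rw [binMean_eq_sum_bernsteinPolynomial]
        refine sum_le_sum fun i _ => ?_
        split_ifs with hfar
        · exact mul_le_of_le_one_right (bernsteinPolynomial_eval_nonneg hp₀ hp₁ n i) (ha i)
        · rw [hnear i (not_le.1 hfar), mul_zero]
    _ ≤ n * p * (1 - p) / n := by
        rw [← sum_filter]; exact sum_bernsteinPolynomial_eval_filter_le hp₀ hp₁ hn' n
    _ = p * (1 - p) := by field_simp

lemma one_sub_le_binMean_of_eq_one_near {p : ℝ} {a : ℕ → ℝ} {n : ℕ} (hp₀ : 0 ≤ p) (hp₁ : p ≤ 1)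
    (hn : 0 < n) (ha : ∀ i, 0 ≤ a i) (hnear : ∀ i : ℕ, (n * p - i) ^ 2 < n → a i = 1) :
    1 - p * (1 - p) ≤ binMean p a n := by
  have := binMean_le_of_eq_zero_near (a := fun i => 1 - a i) hp₀ hp₁ hn
    (fun i => sub_le_self 1 (ha i)) (fun i hi => sub_eq_zero.2 (hnear i hi).symm)
  rw [binMean_one_sub] at this
  linarith

/-- Take `n = ⌈x / p⌉₊`, so that `x ≤ n p < x + 1`. -/
lemma exists_binomial_bulk_subset {p x r : ℝ} (hp₀ : 0 < p) (hp₁ : p ≤ 1) (hx : 0 < x)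
    (hr : 0 ≤ r) (hxr : x / p + 1 ≤ r ^ 2) :
    ∃ n : ℕ, x ≤ n ∧ 0 < n ∧ ∀ i : ℕ, (n * p - i) ^ 2 < n → x - r < i ∧ i < x + 1 + r := by
  set n := ⌈x / p⌉₊
  have hxn : x / p ≤ n := Nat.le_ceil _
  have hnx : (n : ℝ) < x / p + 1 := Nat.ceil_lt_add_one (div_pos hx hp₀).le
  have hlow : x ≤ n * p := (div_le_iff₀ hp₀).1 hxn
  have hup : n * p < x + 1 := by
    have := (lt_div_iff₀ hp₀).1 (show (n : ℝ) - 1 < x / p by linarith)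
    nlinarith
  have hxn' : x ≤ n := (le_div_self hx.le hp₀ hp₁).trans hxn
  refine ⟨n, hxn', Nat.cast_pos.1 (hx.trans_le hxn'), ?_⟩
  intro i hi
  have := abs_lt.1 (abs_lt_of_sq_lt_sq (hi.trans (hnx.trans_le hxr)) hr)
  constructor <;> linarith [this.1, this.2]

lemma exists_one_sub_le_binMean {p x r : ℝ} {a : ℕ → ℝ} (hp₀ : 0 < p) (hp₁ : p ≤ 1) (hx : 0 < x)
    (hr : 0 ≤ r) (hxr : x / p + 1 ≤ r ^ 2) (ha : ∀ i, 0 ≤ a i)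
    (hone : ∀ i : ℕ, x - r < i → i < x + 1 + r → a i = 1) :
    ∃ n : ℕ, x ≤ n ∧ 1 - p * (1 - p) ≤ binMean p a n := by
  obtain ⟨n, hxn, hn, hbulk⟩ := exists_binomial_bulk_subset hp₀ hp₁ hx hr hxr
  exact ⟨n, hxn, one_sub_le_binMean_of_eq_one_near hp₀.le hp₁ hn ha
    fun i hi => hone i (hbulk i hi).1 (hbulk i hi).2⟩

lemma exists_binMean_le {p x r : ℝ} {a : ℕ → ℝ} (hp₀ : 0 < p) (hp₁ : p ≤ 1) (hx : 0 < x)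
    (hr : 0 ≤ r) (hxr : x / p + 1 ≤ r ^ 2) (ha : ∀ i, a i ≤ 1)
    (hzero : ∀ i : ℕ, x - r < i → i < x + 1 + r → a i = 0) :
    ∃ n : ℕ, x ≤ n ∧ binMean p a n ≤ p * (1 - p) := by
  obtain ⟨n, hxn, hn, hbulk⟩ := exists_binomial_bulk_subset hp₀ hp₁ hx hr hxr
  exact ⟨n, hxn, binMean_le_of_eq_zero_near hp₀.le hp₁ hn ha
    fun i hi => hzero i (hbulk i hi).1 (hbulk i hi).2⟩

def blockSet : Set ℕ := {i | ∃ k, 4 ^ k ≤ i ∧ i < 4 ^ k + k * 2 ^ k}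

noncomputable def blockSeq : ℕ → ℝ := blockSet.indicator 1

lemma blockSeq_eq_zero_or_one (n : ℕ) : blockSeq n = 0 ∨ blockSeq n = 1 :=
  Set.indicator_eq_zero_or_self _ _ _

lemma blockSeq_nonneg (n : ℕ) : 0 ≤ blockSeq n := by
  rcases blockSeq_eq_zero_or_one n with h | h <;> simp [h]

lemma blockSeq_le_one (n : ℕ) : blockSeq n ≤ 1 := by
  rcases blockSeq_eq_zero_or_one n with h | h <;> simp [h]

lemma mul_two_pow_le_four_pow (k : ℕ) : k * 2 ^ k ≤ 4 ^ k := by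
  rw [show 4 ^ k = 2 ^ k * 2 ^ k by rw [← mul_pow]; norm_num]
  exact Nat.mul_le_mul_right _ Nat.lt_two_pow_self.le

lemma notMem_blockSet {k i : ℕ} (h₁ : 2 * 4 ^ k ≤ i) (h₂ : i < 4 ^ (k + 1)) : i ∉ blockSet := by
  rintro ⟨j, hji, hij⟩
  rcases le_or_gt j k with hjk | hkj
  · have := (Nat.pow_le_pow_right (by norm_num) hjk : 4 ^ j ≤ 4 ^ k)
    have := Nat.mul_le_mul hjk (Nat.pow_le_pow_right (by norm_num) hjk : 2 ^ j ≤ 2 ^ k)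
    have := mul_two_pow_le_four_pow k
    omega
  · have := (Nat.pow_le_pow_right (by norm_num) hkj : 4 ^ (k + 1) ≤ 4 ^ j)
    omega

lemma exists_one_sub_le_binMean_blockSeq {p : ℝ} (hp₀ : 0 < p) (hp₁ : p ≤ 1) {k : ℕ}
    (hk : 48 ≤ k * p) : ∃ n : ℕ, k ≤ n ∧ 1 - p * (1 - p) ≤ binMean p blockSeq n := by
  have hkM : (k : ℝ) * 2 ^ k ≤ 4 ^ k := by exact_mod_cast mul_two_pow_le_four_pow k
  set M : ℝ := 2 ^ k
  have h4 : (4 : ℝ) ^ k = M ^ 2 := by rw [← pow_mul, mul_comm, pow_mul]; norm_num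
  have hM : 1 ≤ M := one_le_pow₀ (by norm_num)
  rw [h4] at hkM
  have hk48 : 48 ≤ (k : ℝ) := hk.trans (mul_le_of_le_one_right (Nat.cast_nonneg k) hp₁)
  have hxr : (M ^ 2 + k * M / 2) / p + 1 ≤ (k * M / 4) ^ 2 := by
    rw [div_add_one hp₀.ne', div_le_iff₀ hp₀]
    nlinarith [mul_le_mul_of_nonneg_right hk (by positivity : (0 : ℝ) ≤ k * M ^ 2)]
  obtain ⟨n, hn, hbin⟩ := exists_one_sub_le_binMean hp₀ hp₁ (by positivity) (by positivity) hxr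
    blockSeq_nonneg fun i hi₁ hi₂ => Set.indicator_of_mem (by
      refine ⟨k, ?_, ?_⟩
      · exact_mod_cast (show (4 : ℝ) ^ k ≤ i by rw [h4]; nlinarith)
      · exact_mod_cast (show (i : ℝ) < 4 ^ k + k * 2 ^ k by rw [h4]; nlinarith)) 1
  exact ⟨n, by exact_mod_cast (show (k : ℝ) ≤ n by nlinarith), hbin⟩

lemma exists_binMean_blockSeq_le {p : ℝ} (hp₀ : 0 < p) (hp₁ : p ≤ 1) {k : ℕ}
    (hk : 16 ≤ 4 ^ k * p) : ∃ n : ℕ, k ≤ n ∧ binMean p blockSeq n ≤ p * (1 - p) := by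
  have hQ : 16 ≤ (4 : ℝ) ^ k := hk.trans (mul_le_of_le_one_right (by positivity) hp₁)
  have hxr : 3 * 4 ^ k / p + 1 ≤ (4 ^ k / 2) ^ 2 := by
    rw [div_add_one hp₀.ne', div_le_iff₀ hp₀]
    nlinarith [mul_le_mul_of_nonneg_right hk (show (0 : ℝ) ≤ 4 ^ k by positivity)]
  obtain ⟨n, hn, hbin⟩ := exists_binMean_le hp₀ hp₁ (by positivity) (by positivity) hxr
    blockSeq_le_one fun i hi₁ hi₂ => Set.indicator_of_notMem (notMem_blockSet (k := k)
      (by exact_mod_cast (show 2 * (4 : ℝ) ^ k ≤ i by linarith))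
      (by exact_mod_cast (show (i : ℝ) < 4 ^ (k + 1) by rw [pow_succ]; linarith))) 1
  have hk4 : (k : ℝ) ≤ 4 ^ k := by exact_mod_cast (Nat.lt_pow_self (by norm_num)).le
  exact ⟨n, by exact_mod_cast (show (k : ℝ) ≤ n by linarith), hbin⟩

lemma frequently_one_sub_le_binMean_blockSeq {p : ℝ} (hp₀ : 0 < p) (hp₁ : p ≤ 1) :
    ∃ᶠ n in atTop, 1 - p * (1 - p) ≤ binMean p blockSeq n := by
  refine frequently_atTop.2 fun N => ?_
  obtain ⟨k, hNk, hk⟩ := ((eventually_ge_atTop N).and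
    ((tendsto_natCast_atTop_atTop.atTop_mul_const hp₀).eventually_ge_atTop 48)).exists
  obtain ⟨n, hkn, hn⟩ := exists_one_sub_le_binMean_blockSeq hp₀ hp₁ hk
  exact ⟨n, hNk.trans hkn, hn⟩

lemma frequently_binMean_blockSeq_le {p : ℝ} (hp₀ : 0 < p) (hp₁ : p ≤ 1) :
    ∃ᶠ n in atTop, binMean p blockSeq n ≤ p * (1 - p) := by
  refine frequently_atTop.2 fun N => ?_
  obtain ⟨k, hNk, hk⟩ := ((eventually_ge_atTop N).and
    (((tendsto_pow_atTop_atTop_of_one_lt (by norm_num : (1 : ℝ) < 4)).atTop_mul_const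
      hp₀).eventually_ge_atTop 16)).exists
  obtain ⟨n, hkn, hn⟩ := exists_binMean_blockSeq_le hp₀ hp₁ hk
  exact ⟨n, hNk.trans hkn, hn⟩

lemma sum_range_blockSeq_le (n : ℕ) :
    ∑ i ∈ range (n + 1), blockSeq i ≤
      ((Nat.log 4 n + 1) * (Nat.log 4 n * 2 ^ Nat.log 4 n) : ℕ) := by
  classical
  set K := Nat.log 4 n
  have hcover : {i ∈ range (n + 1) | i ∈ blockSet} ⊆
      (range (K + 1)).biUnion fun k => Ico (4 ^ k) (4 ^ k + k * 2 ^ k) := by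
    intro i hi
    obtain ⟨hin, k, hki, hik⟩ := mem_filter.1 hi
    refine mem_biUnion.2 ⟨k, mem_range.2 (Nat.lt_succ_of_le ?_), mem_Ico.2 ⟨hki, hik⟩⟩
    exact Nat.le_log_of_pow_le (by norm_num) (hki.trans (Nat.lt_succ_iff.1 (mem_range.1 hin)))
  have hcard := (card_le_card hcover).trans card_biUnion_le
  have hterm : ∀ k ∈ range (K + 1), #(Ico (4 ^ k) (4 ^ k + k * 2 ^ k)) ≤ K * 2 ^ K := by
    intro k hk
    rw [Nat.card_Ico, Nat.add_sub_cancel_left]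
    have hkK := Nat.lt_succ_iff.1 (mem_range.1 hk)
    exact Nat.mul_le_mul hkK (Nat.pow_le_pow_right (by norm_num) hkK)
  have := hcard.trans (sum_le_card_nsmul _ _ _ hterm)
  rw [card_range, smul_eq_mul] at this
  simpa [blockSeq, Set.indicator_apply, sum_boole] using (Nat.cast_le (α := ℝ)).2 this

lemma cesaroMean_blockSeq_le (n : ℕ) :
    cesaroMean blockSeq n ≤ 2 * (Nat.log 4 n : ℝ) ^ 2 / 2 ^ Nat.log 4 n := by
  have hsum := sum_range_blockSeq_le n
  set K := Nat.log 4 n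
  push_cast at hsum
  have h4K : (4 : ℝ) ^ K ≤ n + 1 := by
    rcases eq_or_ne n 0 with rfl | hn
    · simp [K]
    · exact_mod_cast (Nat.pow_log_le_self 4 hn).trans (Nat.le_succ n)
  have hKK : ((K + 1) * K : ℝ) ≤ 2 * K ^ 2 := by
    have : (K : ℝ) ≤ K ^ 2 := by exact_mod_cast Nat.le_self_pow two_ne_zero K
    nlinarith
  have h2K : (0 : ℝ) < 2 ^ K := by positivity
  calc cesaroMean blockSeq n
      ≤ ((K + 1) * (K * 2 ^ K) : ℝ) / 4 ^ K := by
        rw [cesaroMean, one_div_mul_eq_div]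
        exact div_le_div₀ (by positivity) hsum (by positivity) h4K
    _ = ((K + 1) * K : ℝ) / 2 ^ K := by
        rw [show (4 : ℝ) ^ K = 2 ^ K * 2 ^ K by rw [← mul_pow]; norm_num]
        field_simp
    _ ≤ 2 * (K : ℝ) ^ 2 / 2 ^ K := by gcongr

lemma tendsto_cesaroMean_blockSeq : Tendsto (cesaroMean blockSeq) atTop (nhds 0) := by
  have hlog : Tendsto (Nat.log 4) atTop atTop :=
    tendsto_atTop_atTop.2 fun K => ⟨4 ^ K, fun n hn => Nat.le_log_of_pow_le (by norm_num) hn⟩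
  have hbound : Tendsto (fun K : ℕ => 2 * (K : ℝ) ^ 2 / 2 ^ K) atTop (nhds 0) := by
    simpa [mul_div_assoc] using
      (tendsto_pow_const_div_const_pow_of_one_lt 2 one_lt_two).const_mul (2 : ℝ)
  refine tendsto_of_tendsto_of_tendsto_of_le_of_le tendsto_const_nhds (hbound.comp hlog)
    (fun n => ?_) cesaroMean_blockSeq_le
  exact mul_nonneg (by positivity) (sum_nonneg fun i _ => blockSeq_nonneg i)

theorem exists_zero_one_seq_cesaro_tendsto_zero_binMean_diverges :
    ∃ a : ℕ → ℝ, (∀ n, a n = 0 ∨ a n = 1) ∧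
      Tendsto (cesaroMean a) atTop (nhds 0) ∧
      ∀ p : ℝ, 0 < p → p < 1 → ¬ ∃ l : ℝ, Tendsto (binMean p a) atTop (nhds l) := by
  refine ⟨blockSeq, blockSeq_eq_zero_or_one, tendsto_cesaroMean_blockSeq, ?_⟩
  rintro p hp₀ hp₁ ⟨l, hl⟩
  have hge := ge_of_tendsto_of_frequently hl (frequently_one_sub_le_binMean_blockSeq hp₀ hp₁.le)
  have hle := le_of_tendsto_of_frequently hl (frequently_binMean_blockSeq_le hp₀ hp₁.le)
  nlinarith [sq_nonneg (2 * p - 1)]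
end

section
/- Let P be an m × m real stochastic matrix (m finite). Then the sequence of Cesàro means P*_n = (1/(n+1)) ∑_{i=0}^{n} P^i converges entrywise to some matrix A; moreover A is a stochastic matrix and satisfies AP = PA = A. -/
/-!
For a linear contraction `f` of a finite-dimensional normed space, the fixed subspace
`ker (f - 1)` and `range (f - 1)` are complementary: a fixed vector `y = f x - x` has all its
Birkhoff averages equal to `y`, while those of `f x - x` tend to `0` because the orbit of `x`
is bounded. The abstract mean ergodic theorem then makes the Birkhoff averages converge.

Left multiplication by a stochastic matrix `P` is a contraction for the entrywise sup norm, so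
the Cesàro means of the powers of `P` converge to some `A`. Since the powers of `P` are bounded,
`A` is fixed by left and by right multiplication by `P`, and it is stochastic because the
stochastic matrices form a closed convex set containing every Cesàro mean.
-/

open Filter Finset Matrix Function Topology Bornology

namespace LinearMap

variable {𝕜 E : Type*} [RCLike 𝕜] [NormedAddCommGroup E] [NormedSpace 𝕜 E]
  {f : E →ₗ[𝕜] E}

theorem tendsto_birkhoffAverage_apply_sub_self (hf : LipschitzWith 1 f) (x : E) :
    Tendsto (birkhoffAverage 𝕜 f _root_.id · (f x - x)) atTop (𝓝 0) := by
  have hbdd : IsBounded (Set.range (_root_.id <| f^[·] x)) :=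
    isBounded_iff_forall_norm_le.2 ⟨‖x‖, Set.forall_mem_range.2 fun n ↦ by
      simpa [iterate_map_zero (f : E →+ E) n] using (hf.iterate n).dist_le_mul x 0⟩
  simpa [birkhoffAverage, birkhoffSum, sum_sub_distrib, smul_sub,
    iterate_map_sub (f : E →+ E)] using tendsto_birkhoffAverage_apply_sub_birkhoffAverage 𝕜 hbdd

theorem disjoint_eqLocus_range_sub_one (hf : LipschitzWith 1 f) :
    Disjoint (eqLocus f 1) (range (f - 1)) := by
  refine Submodule.disjoint_def.2 fun y hy ⟨x, hx⟩ ↦ ?_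
  have hfix : IsFixedPt f y := hy
  refine tendsto_nhds_unique (hfix.tendsto_birkhoffAverage 𝕜 _root_.id) ?_
  simpa [← hx] using tendsto_birkhoffAverage_apply_sub_self hf x

theorem isCompl_eqLocus_range_sub_one [FiniteDimensional 𝕜 E] (hf : LipschitzWith 1 f) :
    IsCompl (eqLocus f 1) (range (f - 1)) := by
  refine (Submodule.isCompl_iff_disjoint _ _ ?_).2 (disjoint_eqLocus_range_sub_one hf)
  rw [eqLocus_eq_ker_sub, add_comm, finrank_range_add_finrank_ker]

theorem exists_tendsto_birkhoffAverage [FiniteDimensional 𝕜 E] (hf : LipschitzWith 1 f)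
    (x : E) : ∃ y, Tendsto (birkhoffAverage 𝕜 f _root_.id · x) atTop (𝓝 y) := by
  have h := isCompl_eqLocus_range_sub_one hf
  refine ⟨_, f.tendsto_birkhoffAverage_of_ker_subset_closure hf
    (Submodule.projectionOnto _ _ h).toContinuousLinearMap
    (Submodule.projectionOnto_apply_left h) ?_ x⟩
  simpa using subset_closure

theorem isFixedPt_of_tendsto_birkhoffAverage (hf : Continuous f) {x y : E}
    (hx : IsBounded (Set.range (f^[·] x)))
    (hy : Tendsto (birkhoffAverage 𝕜 f _root_.id · x) atTop (𝓝 y)) : IsFixedPt f y := by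
  have hfy : Tendsto (birkhoffAverage 𝕜 f _root_.id · (f x)) atTop (𝓝 (f y)) := by
    refine ((hf.tendsto y).comp hy).congr fun n ↦ ?_
    simp [birkhoffAverage, birkhoffSum, map_sum, ← iterate_succ_apply' f, iterate_succ_apply]
  have := tendsto_birkhoffAverage_apply_sub_birkhoffAverage 𝕜 (g := _root_.id) hx
  exact sub_eq_zero.1 (tendsto_nhds_unique (hfy.sub hy) this)

end LinearMap

theorem birkhoffAverage_mul_left_one {K R : Type*} [DivisionSemiring K] [Semiring R] [Module K R]
    (a : R) (N : ℕ) :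
    birkhoffAverage K (a * ·) id N 1 = (N : K)⁻¹ • ∑ k ∈ range N, a ^ k := by
  simp [birkhoffAverage, birkhoffSum]

theorem birkhoffAverage_mul_right_one {K R : Type*} [DivisionSemiring K] [Semiring R] [Module K R]
    (a : R) (N : ℕ) :
    birkhoffAverage K (· * a) id N 1 = (N : K)⁻¹ • ∑ k ∈ range N, a ^ k := by
  simp [birkhoffAverage, birkhoffSum]

namespace Matrix

variable {n : Type*} [Fintype n] [DecidableEq n] {P : Matrix n n ℝ}

theorem isClosed_rowStochastic : IsClosed (rowStochastic ℝ n : Set (Matrix n n ℝ)) := by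
  have : (rowStochastic ℝ n : Set (Matrix n n ℝ)) =
      (⋂ i, ⋂ j, {M | 0 ≤ M i j}) ∩ {M | M *ᵥ 1 = 1} := by
    ext M; simp [mem_rowStochastic]
  rw [this]
  exact (isClosed_iInter fun i ↦ isClosed_iInter fun j ↦
    isClosed_le continuous_const (continuous_id.matrix_elem i j)).inter
    (isClosed_eq (continuous_id.matrix_mulVec continuous_const) continuous_const)

theorem inv_natCast_smul_sum_pow_mem_rowStochastic (hP : P ∈ rowStochastic ℝ n) {N : ℕ}
    (hN : N ≠ 0) : (N : ℝ)⁻¹ • ∑ k ∈ range N, P ^ k ∈ rowStochastic ℝ n := by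
  rw [smul_sum]
  refine convex_rowStochastic.sum_mem (fun _ _ ↦ by positivity) ?_ fun k _ ↦ pow_mem hP k
  simp [hN]

-- The entrywise sup norm: left multiplication by `P` is a contraction for it, right
-- multiplication in general is not.
attribute [local instance] Matrix.normedAddCommGroup Matrix.normedSpace

theorem norm_le_one_of_mem_rowStochastic (hP : P ∈ rowStochastic ℝ n) : ‖P‖ ≤ 1 :=
  (norm_le_iff zero_le_one).2 fun _ _ ↦ by
    rw [Real.norm_of_nonneg (nonneg_of_mem_rowStochastic hP)]
    exact le_one_of_mem_rowStochastic hP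

theorem norm_mul_le_of_mem_rowStochastic (hP : P ∈ rowStochastic ℝ n) (X : Matrix n n ℝ) :
    ‖P * X‖ ≤ ‖X‖ := by
  refine (norm_le_iff (norm_nonneg X)).2 fun i j ↦ ?_
  calc ‖(P * X) i j‖ ≤ ∑ k, P i k * ‖X k j‖ := by
        rw [mul_apply]
        refine (norm_sum_le _ _).trans_eq (sum_congr rfl fun k _ ↦ ?_)
        rw [norm_mul, Real.norm_of_nonneg (nonneg_of_mem_rowStochastic hP)]
    _ ≤ ∑ k, P i k * ‖X‖ :=
        sum_le_sum fun k _ ↦ by gcongr; exacts [nonneg_of_mem_rowStochastic hP,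
          norm_entry_le_entrywise_sup_norm X]
    _ = ‖X‖ := by rw [← sum_mul, sum_row_of_mem_rowStochastic hP, one_mul]

theorem exists_tendsto_cesaro_of_mem_rowStochastic (hP : P ∈ rowStochastic ℝ n) :
    ∃ A, Tendsto (fun N : ℕ ↦ (N : ℝ)⁻¹ • ∑ k ∈ range N, P ^ k) atTop (𝓝 A) ∧
      P * A = A ∧ A * P = A := by
  have hLip : LipschitzWith 1 (LinearMap.mulLeft ℝ P) := .of_dist_le_mul fun X Y ↦ by
    simpa [dist_eq_norm, ← mul_sub] using norm_mul_le_of_mem_rowStochastic hP (X - Y)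
  obtain ⟨A, hA⟩ := (LinearMap.mulLeft ℝ P).exists_tendsto_birkhoffAverage hLip 1
  have hbdd : IsBounded (Set.range (P ^ ·)) :=
    isBounded_iff_forall_norm_le.2 ⟨1, Set.forall_mem_range.2 fun k ↦
      norm_le_one_of_mem_rowStochastic (pow_mem hP k)⟩
  have hcesaro : Tendsto (fun N : ℕ ↦ (N : ℝ)⁻¹ • ∑ k ∈ range N, P ^ k) atTop (𝓝 A) := by
    rw [← funext (birkhoffAverage_mul_left_one P)]
    exact hA
  refine ⟨A, hcesaro, ?_, ?_⟩
  · refine LinearMap.isFixedPt_of_tendsto_birkhoffAverage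
      (LinearMap.continuous_of_finiteDimensional _) ?_ hA
    show IsBounded (Set.range ((P * ·)^[·] 1))
    simpa using hbdd
  · refine LinearMap.isFixedPt_of_tendsto_birkhoffAverage (f := LinearMap.mulRight ℝ P) (x := 1)
      (LinearMap.continuous_of_finiteDimensional _) ?_ ?_
    · show IsBounded (Set.range ((· * P)^[·] 1))
      simpa using hbdd
    · rw [← funext (birkhoffAverage_mul_right_one P)] at hcesaro
      exact hcesaro

end Matrix

theorem cesaro_of_stochastic_matrix_converges
    (m : ℕ) (P : Matrix (Fin m) (Fin m) ℝ)
    (hP_nonneg : ∀ i j, 0 ≤ P i j) (hP_rowsum : ∀ i, ∑ j, P i j = 1) :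
    ∃ A : Matrix (Fin m) (Fin m) ℝ,
      (∀ i j, Tendsto
        (fun n : ℕ => (1 / (n + 1 : ℝ)) * (∑ k ∈ Finset.range (n + 1), P ^ k) i j)
        atTop (nhds (A i j))) ∧
      (∀ i j, 0 ≤ A i j) ∧ (∀ i, ∑ j, A i j = 1) ∧
      A * P = A ∧ P * A = A := by
  have hP : P ∈ rowStochastic ℝ (Fin m) := mem_rowStochastic_iff_sum.2 ⟨hP_nonneg, hP_rowsum⟩
  obtain ⟨A, hA, hPA, hAP⟩ := exists_tendsto_cesaro_of_mem_rowStochastic hP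
  have hA_mem : A ∈ rowStochastic ℝ (Fin m) := isClosed_rowStochastic.mem_of_tendsto hA <|
    (eventually_ne_atTop 0).mono fun _ ↦ inv_natCast_smul_sum_pow_mem_rowStochastic hP
  refine ⟨A, fun i j ↦ ?_, (mem_rowStochastic_iff_sum.1 hA_mem).1,
    (mem_rowStochastic_iff_sum.1 hA_mem).2, hAP, hPA⟩
  simpa [one_div] using (((tendsto_add_atTop_iff_nat 1).2 hA).apply_nhds i).apply_nhds j
end

section
/- Let P be an m × m real stochastic matrix and let P̃ = (1/2)(P + I), regarded as a complex matrix. Then the algebraic and geometric multiplicities of the eigenvalue 1 of P̃ coincide; equivalently, the generalized eigenspace of P̃ for the eigenvalue 1 (the kernel of (P̃ − I)^m) equals the eigenspace of P̃ for the eigenvalue 1 (the kernel of P̃ − I). -/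
/-!
`P̃ = (P + I)/2` is again stochastic, so all its powers are contractions for the sup norm on `ℂᵐ`.
A Jordan block at the eigenvalue `1` would give vectors `v` and `w = (P̃ - I) v ≠ 0` with
`P̃ⁿ v = v + n w`, an orbit growing linearly in `n`. Hence `ker (P̃ - I)² = ker (P̃ - I)`, and then
the kernels of all higher powers coincide as well.
-/

open Finset Matrix

namespace Module.End

variable {𝕜 E : Type*} [RCLike 𝕜] [NormedAddCommGroup E] [NormedSpace 𝕜 E] {f : Module.End 𝕜 E}

theorem ker_sub_one_sq_le_of_bddAbove_norm_pow_apply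
    (hf : ∀ v, BddAbove (Set.range fun n : ℕ => ‖(f ^ n) v‖)) :
    LinearMap.ker ((f - 1) ^ 2) ≤ LinearMap.ker (f - 1) := by
  intro v hv
  set w := (f - 1) v
  have hfw : f w = w := by
    rw [LinearMap.mem_ker, sq, mul_apply, LinearMap.sub_apply, one_apply, sub_eq_zero] at hv
    exact hv
  have hfv : f v = v + w := by simp [w]
  have orbit (n : ℕ) : (f ^ n) v = v + (n : 𝕜) • w := by
    induction n with
    | zero => simp
    | succ n ih => rw [pow_succ', mul_apply, ih, map_add, hfv, map_smul, hfw]; push_cast; module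
  obtain ⟨C, hC⟩ := hf v
  have growth (n : ℕ) : n * ‖w‖ ≤ C + ‖v‖ := by
    have hn : ‖(f ^ n) v‖ ≤ C := hC ⟨n, rfl⟩
    calc n * ‖w‖ = ‖(n : 𝕜) • w‖ := by rw [norm_smul, RCLike.norm_natCast]
      _ = ‖(f ^ n) v - v‖ := by rw [orbit, add_sub_cancel_left]
      _ ≤ C + ‖v‖ := (norm_sub_le _ _).trans (by gcongr)
  rw [LinearMap.mem_ker, ← norm_le_zero_iff]
  by_contra! hw
  obtain ⟨n, hn⟩ := exists_nat_gt ((C + ‖v‖) / ‖w‖)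
  exact (growth n).not_gt ((div_lt_iff₀ hw).mp hn)

theorem ker_sub_one_pow_eq_of_bddAbove_norm_pow_apply
    (hf : ∀ v, BddAbove (Set.range fun n : ℕ => ‖(f ^ n) v‖)) {k : ℕ} (hk : k ≠ 0) :
    LinearMap.ker ((f - 1) ^ k) = LinearMap.ker (f - 1) := by
  have h : LinearMap.ker ((f - 1) ^ 1) = LinearMap.ker ((f - 1) ^ 2) := by
    rw [pow_one]
    exact le_antisymm (by rw [sq]; exact LinearMap.ker_le_ker_comp _ _)
      (ker_sub_one_sq_le_of_bddAbove_norm_pow_apply hf)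
  obtain ⟨j, rfl⟩ := Nat.exists_eq_add_of_le' (Nat.one_le_iff_ne_zero.mpr hk)
  rw [add_comm, ← ker_pow_constant h j, pow_one]

end Module.End

namespace Matrix

variable {n : Type*} [Fintype n] [DecidableEq n] {Q : Matrix n n ℝ}

theorem norm_map_ofReal_mulVec_le_of_mem_rowStochastic (hQ : Q ∈ rowStochastic ℝ n)
    (v : n → ℂ) : ‖Q.map Complex.ofReal *ᵥ v‖ ≤ ‖v‖ := by
  refine (pi_norm_le_iff_of_nonneg (norm_nonneg v)).mpr fun i => ?_
  calc ‖(Q.map Complex.ofReal *ᵥ v) i‖ = ‖∑ j, (Q i j : ℂ) * v j‖ := rfl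
    _ ≤ ∑ j, Q i j * ‖v j‖ := by
      refine (norm_sum_le _ _).trans_eq (sum_congr rfl fun j _ => ?_)
      rw [norm_mul, Complex.norm_of_nonneg (nonneg_of_mem_rowStochastic hQ)]
    _ ≤ ∑ j, Q i j * ‖v‖ := by
      gcongr with j
      · exact nonneg_of_mem_rowStochastic hQ
      · exact norm_le_pi_norm v j
    _ = ‖v‖ := by rw [← sum_mul, sum_row_of_mem_rowStochastic hQ, one_mul]

theorem norm_toLin'_map_ofReal_pow_apply_le_of_mem_rowStochastic
    (hQ : Q ∈ rowStochastic ℝ n) (k : ℕ) (v : n → ℂ) :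
    ‖(toLin' (Q.map Complex.ofReal) ^ k) v‖ ≤ ‖v‖ := by
  induction k with
  | zero => simp
  | succ k ih =>
    rw [pow_succ', Module.End.mul_apply, toLin'_apply]
    exact (norm_map_ofReal_mulVec_le_of_mem_rowStochastic hQ _).trans ih

theorem half_smul_add_one_mem_rowStochastic {P : Matrix n n ℝ} (hP : P ∈ rowStochastic ℝ n) :
    (1 / 2 : ℝ) • (P + 1) ∈ rowStochastic ℝ n := by
  rw [smul_add]
  exact convex_rowStochastic hP (one_mem _) (by norm_num) (by norm_num) (by norm_num)

end Matrix

theorem generalized_eigenspace_eq_eigenspace_for_one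
    (m : ℕ) (P : Matrix (Fin m) (Fin m) ℝ)
    (hP_nonneg : ∀ i j, 0 ≤ P i j) (hP_rowsum : ∀ i, ∑ j, P i j = 1) :
    LinearMap.ker (Matrix.toLin'
        ((((1 / 2 : ℝ) • (P + 1)).map (Complex.ofReal) - 1) ^ m)) =
    LinearMap.ker (Matrix.toLin'
        (((1 / 2 : ℝ) • (P + 1)).map (Complex.ofReal) - 1)) := by
  obtain rfl | hm := eq_or_ne m 0
  · exact Subsingleton.elim _ _
  have hQ := half_smul_add_one_mem_rowStochastic
    (mem_rowStochastic_iff_sum.mpr ⟨hP_nonneg, hP_rowsum⟩)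
  rw [toLin'_pow, map_sub, toLin'_one]
  exact Module.End.ker_sub_one_pow_eq_of_bddAbove_norm_pow_apply
    (fun v => ⟨‖v‖, by
      rintro _ ⟨k, rfl⟩
      exact norm_toLin'_map_ofReal_pow_apply_le_of_mem_rowStochastic hQ k v⟩) hm
end
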